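/- arXiv:1204.3488 — 7 statements merged into one kernel-verified Lean document; each statement's English description precedes it below -/
import Mathlib

section
/- If a set P of points in the Euclidean plane ℝ² has diameter at most 1 (i.e., every two points of P are at Euclidean distance at most 1), then P is contained in some closed disk of radius 1/√3. -/
/-!
By Helly's theorem in the plane it suffices to cover any three points of the set. If their
triangle has an angle of at least `π / 2`, the disk with the opposite side as diameter has
radius at most `1 / 2`. Otherwise the triangle is acute and its circumcircle works: the largest
angle `α` lies in `[π / 3, π / 2)`, so by the law of sines the circumradius is
`(opposite side) / (2 sin α) ≤ 1 / √3`.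
-/

open EuclideanGeometry Metric Module Real Finset

section Triangle

variable {V P : Type*} [NormedAddCommGroup V] [InnerProductSpace ℝ V] [MetricSpace P]
  [NormedAddTorsor V P]

theorem dist_midpoint_le_of_pi_div_two_le_angle {a b c : P} (h : π / 2 ≤ ∠ b a c) :
    dist a (midpoint ℝ b c) ≤ dist b c / 2 := by
  have hcos : cos (∠ b a c) ≤ 0 :=
    cos_nonpos_of_pi_div_two_le_of_le h (by linarith [angle_le_pi b a c, pi_pos])
  have hobtuse : dist a b ^ 2 + dist a c ^ 2 ≤ dist b c ^ 2 := by
    have hlaw := law_cos b a c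
    rw [dist_comm b a, dist_comm c a] at hlaw
    nlinarith [mul_nonneg (mul_nonneg (dist_nonneg (x := a) (y := b))
      (dist_nonneg (x := a) (y := c))) (neg_nonneg.2 hcos)]
  have hapollonius := dist_sq_add_dist_sq_eq_two_mul_dist_midpoint_sq_add_half_dist_sq a b c
  refine (pow_le_pow_iff_left₀ dist_nonneg (by positivity) two_ne_zero).1 ?_
  linarith

theorem insert_subset_closedBall_midpoint_of_pi_div_two_le_angle {a b c : P}
    (h : π / 2 ≤ ∠ b a c) : {a, b, c} ⊆ closedBall (midpoint ℝ b c) (dist b c / 2) := by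
  simp only [Set.insert_subset_iff, Set.singleton_subset_iff, mem_closedBall]
  refine ⟨dist_midpoint_le_of_pi_div_two_le_angle h, ?_, ?_⟩
  · rw [dist_left_midpoint, Real.norm_two, inv_mul_eq_div]
  · rw [dist_right_midpoint, Real.norm_two, inv_mul_eq_div]

theorem Affine.Triangle.sqrt_three_mul_circumradius_le_dist (t : Affine.Triangle ℝ P)
    {i₁ i₂ i₃ : Fin 3} (h₁₂ : i₁ ≠ i₂) (h₁₃ : i₁ ≠ i₃) (h₂₃ : i₂ ≠ i₃)
    (hlow : π / 3 ≤ ∠ (t.points i₁) (t.points i₂) (t.points i₃))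
    (hup : ∠ (t.points i₁) (t.points i₂) (t.points i₃) ≤ π / 2) :
    √3 * t.circumradius ≤ dist (t.points i₁) (t.points i₃) := by
  have hsin : √3 / 2 ≤ sin (∠ (t.points i₁) (t.points i₂) (t.points i₃)) :=
    sin_pi_div_three ▸ sin_le_sin_of_le_of_le_pi_div_two (by linarith [pi_pos]) hup hlow
  have hlaw := t.dist_div_sin_angle_eq_two_mul_circumradius h₁₂ h₁₃ h₂₃
  rw [div_eq_iff (by positivity [hsin.trans_lt' (by positivity)])] at hlaw
  nlinarith [t.circumradius_nonneg]

theorem exists_insert_subset_closedBall_of_angle_lt_pi_div_two {a b c : P} {d : ℝ}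
    (hab : dist a b ≤ d) (hbc : dist b c ≤ d) (hca : dist c a ≤ d)
    (ha : ∠ b a c < π / 2) (hb : ∠ c b a < π / 2) (hc : ∠ a c b < π / 2) :
    ∃ x, {a, b, c} ⊆ closedBall x (d / √3) := by
  have hba : b ≠ a := by rintro rfl; simp at ha
  have hsum := angle_add_angle_add_angle_eq_pi c hba
  rw [angle_comm a b c, angle_comm b c a, angle_comm c a b] at hsum
  have hindep : AffineIndependent ℝ ![a, b, c] := by
    rw [affineIndependent_iff_not_collinear_set,
      collinear_iff_eq_or_eq_or_angle_eq_zero_or_angle_eq_pi, angle_comm a b c]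
    rintro (rfl | rfl | h0 | hπ)
    · simp at ha
    · simp at hb
    · linarith
    · linarith [pi_pos]
  let t : Affine.Triangle ℝ P := ⟨![a, b, c], hindep⟩
  have hR : √3 * t.circumradius ≤ d := by
    by_cases hA : π / 3 ≤ ∠ b a c
    · exact (t.sqrt_three_mul_circumradius_le_dist (i₁ := 1) (i₂ := 0) (i₃ := 2)
        (by decide) (by decide) (by decide) hA ha.le).trans hbc
    by_cases hB : π / 3 ≤ ∠ c b a
    · exact (t.sqrt_three_mul_circumradius_le_dist (i₁ := 2) (i₂ := 1) (i₃ := 0)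
        (by decide) (by decide) (by decide) hB hb.le).trans hca
    · have hC : π / 3 ≤ ∠ a c b := by linarith
      exact (t.sqrt_three_mul_circumradius_le_dist (i₁ := 0) (i₂ := 2) (i₃ := 1)
        (by decide) (by decide) (by decide) hC hc.le).trans hab
  refine ⟨t.circumcenter, ?_⟩
  have hRd : t.circumradius ≤ d / √3 := by
    rw [le_div_iff₀ (by positivity)]; linarith
  simp only [Set.insert_subset_iff, Set.singleton_subset_iff, mem_closedBall]
  exact ⟨(t.dist_circumcenter_eq_circumradius 0).trans_le hRd,
    (t.dist_circumcenter_eq_circumradius 1).trans_le hRd,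
    (t.dist_circumcenter_eq_circumradius 2).trans_le hRd⟩

end Triangle

theorem exists_insert_subset_closedBall_of_dist_le {V P : Type*} [NormedAddCommGroup V]
    [InnerProductSpace ℝ V] [MetricSpace P] [NormedAddTorsor V P] {a b c : P} {d : ℝ}
    (hab : dist a b ≤ d) (hbc : dist b c ≤ d) (hca : dist c a ≤ d) :
    ∃ x, {a, b, c} ⊆ closedBall x (d / √3) := by
  have hhalf : d / 2 ≤ d / √3 := by
    have : √3 ≤ 2 := Real.sqrt_le_iff.2 ⟨by norm_num, by norm_num⟩
    gcongr
    linarith [dist_nonneg (x := a) (y := b)]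
  by_cases ha : π / 2 ≤ ∠ b a c
  · exact ⟨_, (insert_subset_closedBall_midpoint_of_pi_div_two_le_angle ha).trans
      (closedBall_subset_closedBall (by linarith))⟩
  by_cases hb : π / 2 ≤ ∠ c b a
  · refine ⟨midpoint ℝ c a, ?_⟩
    rw [Set.insert_comm, Set.pair_comm]
    exact (insert_subset_closedBall_midpoint_of_pi_div_two_le_angle hb).trans
      (closedBall_subset_closedBall (by linarith))
  by_cases hc : π / 2 ≤ ∠ a c b
  · refine ⟨midpoint ℝ a b, ?_⟩
    rw [Set.pair_comm, Set.insert_comm]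
    exact (insert_subset_closedBall_midpoint_of_pi_div_two_le_angle hc).trans
      (closedBall_subset_closedBall (by linarith))
  push Not at ha hb hc
  exact exists_insert_subset_closedBall_of_angle_lt_pi_div_two hab hbc hca ha hb hc

theorem Finset.exists_forall_eq_or_eq_or_eq_of_card_le_three {α : Type*} {s : Finset α}
    (hs : #s ≤ 3) (hne : s.Nonempty) : ∃ a b c, ∀ x ∈ s, x = a ∨ x = b ∨ x = c := by
  classical
  interval_cases h : #s
  · exact absurd h hne.card_pos.ne'
  · obtain ⟨a, rfl⟩ := card_eq_one.1 h
    exact ⟨a, a, a, by simp⟩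
  · obtain ⟨a, b, -, rfl⟩ := card_eq_two.1 h
    exact ⟨a, b, b, by simp⟩
  · obtain ⟨a, b, c, -, -, -, rfl⟩ := card_eq_three.1 h
    exact ⟨a, b, c, by simp⟩

theorem exists_subset_closedBall_of_finrank_le_two {V : Type*} [NormedAddCommGroup V]
    [InnerProductSpace ℝ V] [FiniteDimensional ℝ V] (hV : finrank ℝ V ≤ 2) {s : Set V} {d : ℝ}
    (hs : ∀ x ∈ s, ∀ y ∈ s, dist x y ≤ d) : ∃ c, s ⊆ closedBall c (d / √3) := by
  have hcover : ∀ I : Finset s, #I ≤ finrank ℝ V + 1 →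
      (⋂ i ∈ I, closedBall (i : V) (d / √3)).Nonempty := by
    intro I hI
    rcases I.eq_empty_or_nonempty with rfl | hne
    · simp
    obtain ⟨p, q, r, hpqr⟩ := I.exists_forall_eq_or_eq_or_eq_of_card_le_three (by omega) hne
    obtain ⟨x, hx⟩ := exists_insert_subset_closedBall_of_dist_le
      (hs _ p.2 _ q.2) (hs _ q.2 _ r.2) (hs _ r.2 _ p.2)
    refine ⟨x, Set.mem_iInter₂.2 fun i hi ↦ mem_closedBall_comm.1 (hx ?_)⟩
    rcases hpqr i hi with rfl | rfl | rfl <;> simp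
  obtain ⟨c, hc⟩ := Convex.helly_theorem_compact' (F := fun p : s ↦ closedBall (p : V) (d / √3))
    (fun _ ↦ convex_closedBall _ _) (fun _ ↦ isCompact_closedBall _ _) hcover
  exact ⟨c, fun y hy ↦ mem_closedBall_comm.1 (Set.mem_iInter.1 hc ⟨y, hy⟩)⟩

/-- Pál's universal cover theorem: a planar set of diameter at most 1 is contained
in some closed disk of radius `1/√3`. -/
theorem pal_universal_cover (P : Set (EuclideanSpace ℝ (Fin 2)))
    (hdiam : ∀ x ∈ P, ∀ y ∈ P, dist x y ≤ 1) :
    ∃ c : EuclideanSpace ℝ (Fin 2), P ⊆ Metric.closedBall c (1 / Real.sqrt 3) :=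
  exists_subset_closedBall_of_finrank_le_two finrank_euclideanSpace_fin.le hdiam
end

section
/- Let G be a unit disk graph, let I be an independent set of G, and let D* be a dominating set of G. Then |I| ≤ 5·|D*|. In particular, every maximal independent set of G (which is an independent dominating set) is a 5-approximation to the minimum dominating set of G. -/
/-!
Every vertex of `I` lies within distance 1 of a vertex of `D*`, so it suffices that at most five
points of `I` lie within distance 1 of a single point `c`. Points of `I` are more than 1 apart,
and by the law of cosines two points of the closed unit disk around `c` that subtend an angle
at most `π / 3` at `c` are within distance 1 of each other. But among six directions in the
plane two always make an angle at most `π / 3`: measure them from one of them; the others, if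
further than `π / 3` from it, lie in `(-π, -π / 3) ∪ (π / 3, π]`, which four arcs of length
`π / 3` cover.
-/

/-- A unit disk graph: a simple graph realized by planar points, two distinct
vertices being adjacent iff their Euclidean distance is at most 1. -/
def IsUnitDiskGraph {V : Type*} (G : SimpleGraph V) : Prop :=
  ∃ p : V → EuclideanSpace ℝ (Fin 2),
    ∀ u v : V, G.Adj u v ↔ u ≠ v ∧ dist (p u) (p v) ≤ 1

/-- A set of pairwise non-adjacent vertices. -/
def IsIndependentSet {V : Type*} (G : SimpleGraph V) (S : Set V) : Prop :=
  S.Pairwise (fun u v => ¬ G.Adj u v)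

/-- A dominating set: every vertex outside it has a neighbor in it. -/
def IsDominatingSet {V : Type*} (G : SimpleGraph V) (D : Set V) : Prop :=
  ∀ v : V, v ∉ D → ∃ u ∈ D, G.Adj u v

open Real Finset Module InnerProductGeometry

theorem InnerProductGeometry.norm_sub_le_of_angle_le_pi_div_three {V : Type*}
    [NormedAddCommGroup V] [InnerProductSpace ℝ V] {x y : V} {r : ℝ}
    (hx : ‖x‖ ≤ r) (hy : ‖y‖ ≤ r) (h : angle x y ≤ π / 3) : ‖x - y‖ ≤ r := by
  have hcos : 1 / 2 ≤ cos (angle x y) := by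
    rw [← cos_pi_div_three]
    exact cos_le_cos_of_nonneg_of_le_pi (angle_nonneg x y) (by linarith [pi_pos]) h
  have hsq := norm_sub_sq_eq_norm_sq_add_norm_sq_sub_two_mul_norm_mul_norm_mul_cos_angle x y
  have hx0 := norm_nonneg x
  have hy0 := norm_nonneg y
  nlinarith [norm_nonneg (x - y), mul_nonneg hx0 hy0]

theorem exists_ne_abs_sub_lt_pi_div_three {ι : Type*} {s : Finset ι} {φ : ι → ℝ}
    (hs : 4 < #s) (hφ : ∀ i ∈ s, φ i ∈ Set.Ioc (-π) π) (hfar : ∀ i ∈ s, π / 3 < |φ i|) :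
    ∃ i ∈ s, ∃ j ∈ s, i ≠ j ∧ |φ i - φ j| < π / 3 := by
  have hπ3 : 0 < π / 3 := by positivity
  -- `-φ i / (π / 3)` lies in `[-3, -1) ∪ (1, 3)`, so its floor takes only four values.
  let sector (i : ι) : ℤ := ⌊-φ i / (π / 3)⌋
  have hmaps : Set.MapsTo sector s ({-3, -2, 1, 2} : Finset ℤ) := by
    intro i hi
    obtain ⟨hlo, hhi⟩ := hφ i hi
    set y := -φ i / (π / 3)
    have hy : 1 < |y| := by
      rw [abs_div, abs_neg, abs_of_pos hπ3, one_lt_div hπ3]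
      exact hfar i hi
    have hy_lo : -3 ≤ ⌊y⌋ := Int.le_floor.2 (by push_cast; rw [le_div_iff₀ hπ3]; linarith)
    have hy_hi : ⌊y⌋ < 3 := Int.floor_lt.2 (by push_cast; rw [div_lt_iff₀ hπ3]; linarith)
    have hy_far : 1 ≤ ⌊y⌋ ∨ ⌊y⌋ < -1 := (lt_abs.1 hy).imp
      (fun h ↦ Int.le_floor.2 (by exact_mod_cast h.le))
      (fun h ↦ Int.floor_lt.2 (by push_cast; linarith))
    show ⌊y⌋ ∈ (({-3, -2, 1, 2} : Finset ℤ) : Set ℤ)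
    simp only [coe_insert, coe_singleton, Set.mem_insert_iff, Set.mem_singleton_iff]
    omega
  obtain ⟨i, hi, j, hj, hij, hsector⟩ :=
    exists_ne_map_eq_of_card_lt_of_maps_to (by simpa using hs) hmaps
  refine ⟨i, hi, j, hj, hij, ?_⟩
  have h := Int.abs_sub_lt_one_of_floor_eq_floor hsector
  rwa [← sub_div, abs_div, abs_of_pos hπ3, div_lt_one hπ3, neg_sub_neg, abs_sub_comm] at h

theorem Real.Angle.exists_ne_abs_toReal_sub_le_pi_div_three {ι : Type*} {s : Finset ι}
    (θ : ι → Real.Angle) (hs : 5 < #s) :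
    ∃ i ∈ s, ∃ j ∈ s, i ≠ j ∧ |(θ i - θ j).toReal| ≤ π / 3 := by
  classical
  obtain ⟨i₀, hi₀⟩ := card_pos.1 (by omega : 0 < #s)
  by_cases hnear : ∃ i ∈ s.erase i₀, |(θ i - θ i₀).toReal| ≤ π / 3
  · obtain ⟨i, hi, h⟩ := hnear
    exact ⟨i, mem_of_mem_erase hi, i₀, hi₀, ne_of_mem_erase hi, h⟩
  push Not at hnear
  obtain ⟨i, hi, j, hj, hij, h⟩ := exists_ne_abs_sub_lt_pi_div_three
    (φ := fun i ↦ (θ i - θ i₀).toReal) (by rw [card_erase_of_mem hi₀]; omega)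
    (fun i _ ↦ ⟨Real.Angle.neg_pi_lt_toReal _, Real.Angle.toReal_le_pi _⟩) hnear
  refine ⟨i, mem_of_mem_erase hi, j, mem_of_mem_erase hj, hij, ?_⟩
  have hsub : θ i - θ j = (((θ i - θ i₀).toReal - (θ j - θ i₀).toReal : ℝ) : Real.Angle) := by
    rw [Real.Angle.coe_sub, Real.Angle.coe_toReal, Real.Angle.coe_toReal]; abel
  have hπ := pi_pos
  rw [hsub, Real.Angle.toReal_coe_eq_self_iff.2 (by constructor <;> linarith [abs_lt.1 h])]
  exact h.le

theorem InnerProductGeometry.exists_ne_angle_le_pi_div_three {ι V : Type*} [NormedAddCommGroup V]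
    [InnerProductSpace ℝ V] [Fact (finrank ℝ V = 2)] {s : Finset ι} (v : ι → V)
    (hv : ∀ i ∈ s, v i ≠ 0) (hs : 5 < #s) :
    ∃ i ∈ s, ∃ j ∈ s, i ≠ j ∧ angle (v i) (v j) ≤ π / 3 := by
  have : FiniteDimensional ℝ V := .of_fact_finrank_eq_two
  let o : Orientation ℝ V (Fin 2) := (finBasisOfFinrankEq ℝ V Fact.out).orientation
  obtain ⟨i₀, hi₀⟩ := card_pos.1 (by omega : 0 < #s)
  obtain ⟨i, hi, j, hj, hij, h⟩ :=
    Real.Angle.exists_ne_abs_toReal_sub_le_pi_div_three (fun i ↦ o.oangle (v i₀) (v i)) hs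
  refine ⟨j, hj, i, hi, hij.symm, ?_⟩
  rwa [o.angle_eq_abs_oangle_toReal (hv j hj) (hv i hi),
    ← o.oangle_sub_left (hv i₀ hi₀) (hv j hj) (hv i hi)]

theorem Finset.card_le_five_of_dist_le_of_pairwise_lt_dist {ι V : Type*} [NormedAddCommGroup V]
    [InnerProductSpace ℝ V] [Fact (finrank ℝ V = 2)] {s : Finset ι} {x : ι → V} {c : V} {r : ℝ}
    (hc : ∀ i ∈ s, dist (x i) c ≤ r) (hx : (s : Set ι).Pairwise fun i j ↦ r < dist (x i) (x j)) :
    #s ≤ 5 := by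
  by_contra! hs
  have hne : ∀ i ∈ s, x i - c ≠ 0 := by
    intro i hi hxi
    obtain ⟨j, hj, hji⟩ := exists_mem_ne (by omega : 1 < #s) i
    have hfar : r < dist (x i) (x j) := hx hi hj hji.symm
    rw [sub_eq_zero.1 hxi, dist_comm] at hfar
    linarith [hc j hj]
  obtain ⟨i, hi, j, hj, hij, h⟩ := exists_ne_angle_le_pi_div_three _ hne hs
  have hle := norm_sub_le_of_angle_le_pi_div_three ((dist_eq_norm _ _).symm.trans_le (hc i hi))
    ((dist_eq_norm _ _).symm.trans_le (hc j hj)) h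
  rw [sub_sub_sub_cancel_right, ← dist_eq_norm] at hle
  exact (hx hi hj hij).not_ge hle

theorem IsIndependentSet.pairwise_one_lt_dist {V P : Type*} [PseudoMetricSpace P]
    {G : SimpleGraph V} {I : Set V} {p : V → P} (hI : IsIndependentSet G I)
    (hp : ∀ u v, u ≠ v → dist (p u) (p v) ≤ 1 → G.Adj u v) :
    I.Pairwise fun u v ↦ 1 < dist (p u) (p v) :=
  fun _ hu _ hv huv ↦ lt_of_not_ge fun h ↦ hI hu hv huv (hp _ _ huv h)

theorem IsDominatingSet.exists_dist_le_one {V P : Type*} [PseudoMetricSpace P]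
    {G : SimpleGraph V} {D : Set V} {p : V → P} (hD : IsDominatingSet G D)
    (hp : ∀ u v, G.Adj u v → dist (p u) (p v) ≤ 1) (v : V) :
    ∃ d ∈ D, dist (p v) (p d) ≤ 1 := by
  by_cases hv : v ∈ D
  · exact ⟨v, hv, by simp⟩
  · obtain ⟨d, hd, hdv⟩ := hD v hv
    exact ⟨d, hd, dist_comm (p v) (p d) ▸ hp d v hdv⟩

/-- In a unit disk graph, any independent set is at most 5 times larger than
any dominating set. -/
theorem indep_le_five_dominating {V : Type*} [Fintype V] (G : SimpleGraph V)
    (hG : IsUnitDiskGraph G) (I : Set V) (hI : IsIndependentSet G I)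
    (Dstar : Set V) (hD : IsDominatingSet G Dstar) :
    I.ncard ≤ 5 * Dstar.ncard := by
  classical
  obtain ⟨p, hp⟩ := hG
  have : Fact (finrank ℝ (EuclideanSpace ℝ (Fin 2)) = 2) := ⟨finrank_euclideanSpace_fin⟩
  let near (d : V) : Finset V := {v ∈ I.toFinset | dist (p v) (p d) ≤ 1}
  have hcover : I.toFinset ⊆ Dstar.toFinset.biUnion near := by
    intro v hv
    obtain ⟨d, hd, hvd⟩ := hD.exists_dist_le_one (fun u v h ↦ ((hp u v).1 h).2) v
    exact mem_biUnion.2 ⟨d, Set.mem_toFinset.2 hd, mem_filter.2 ⟨hv, hvd⟩⟩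
  have hsep := hI.pairwise_one_lt_dist fun u v huv h ↦ (hp u v).2 ⟨huv, h⟩
  have hnear (d : V) : #(near d) ≤ 5 :=
    card_le_five_of_dist_le_of_pairwise_lt_dist (fun v hv ↦ (mem_filter.1 hv).2)
      (hsep.mono fun v hv ↦ Set.mem_toFinset.1 (mem_filter.1 hv).1)
  rw [Set.ncard_eq_toFinset_card', Set.ncard_eq_toFinset_card', mul_comm]
  exact (card_le_card hcover).trans (card_biUnion_le_card_mul _ _ _ fun d _ ↦ hnear d)
end

section
/- Let G be a unit disk graph and let v be a vertex of G. Let k be the number of degree-1 neighbors of v and let ℓ be the number of degree-1 vertices of G at graph distance exactly 2 from v. Then k + ℓ ≤ 22. (Equivalently: if G is a (k,ℓ)-pendant unit disk graph, then k + ℓ ≤ 22.) -/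
/-!
Put `v` at the origin of `ℂ`. A pendant neighbour of `v` lies in the closed unit disc and two of
them are more than `1` apart, so they subtend an angle `> π/3` at the origin. A pendant vertex at
distance two lies in the annulus `1 < |z| ≤ 2`, within distance `1` of its unique neighbour (its
hub), which is adjacent to `v` but to no pendant neighbour of `v`. By the law of cosines two such
vertices subtend an angle `> 2π/9` when both have `|z| ≤ √2` (so there are at most `8` of these) and
`> 2π/13` when both have `|z| > √2` (at most `12`); this settles `k ≤ 2`. A far vertex (`|z| > √2`)
is within angle `π/4` of its hub, which is at angle `> π/3` from every pendant neighbour.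

For `k ≥ 3` the directions of the `k` pendant neighbours cut the circle into `k` arcs, each longer
than `π/3`. An arc holding `n ≥ 1` far vertices also holds their hubs, so it is longer than `2π/3`,
and the far vertices sit more than `π/12` inside it and `2π/13` apart; either way the arc is longer
than `π/3 + nπ/12`. Summing over the arcs gives `4k + ℓ₂ < 24` for the number `ℓ₂` of far
vertices, hence `k + ℓ ≤ k + 8 + (23 - 4k) ≤ 22`.
-/

open Finset Real InnerProductGeometry

theorem card_eq_card_filter_lt_add_card_filter_lt_and_lt {R : Finset ℝ} {b' b : ℝ}
    (hR : ∀ r ∈ R, r ≠ b' ∧ r < b) :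
    #R = #{r ∈ R | r < b'} + #{r ∈ R | b' < r ∧ r < b} := by
  rw [← card_filter_add_card_filter_not (fun r => r < b')]
  congr 2
  refine filter_congr fun r hr => ?_
  obtain ⟨hrb', hrb⟩ := hR r hr
  exact ⟨fun h => ⟨lt_of_le_of_ne (not_lt.1 h) hrb'.symm, hrb⟩, fun h => not_lt.2 h.1.le⟩

theorem card_sub_one_mul_add_card_mul_lt_of_gaps {c d a b : ℝ} {W R : Finset ℝ} (ha : a ∈ W)
    (hb : b ∈ W) (hab : a < b) (hW : ∀ w ∈ W, a ≤ w ∧ w ≤ b) (hR : ∀ r ∈ R, a < r ∧ r < b ∧ r ∉ W)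
    (hgap : ∀ w ∈ W, ∀ w' ∈ W, w < w' → (∀ x ∈ W, x ∉ Set.Ioo w w') →
      c + #{r ∈ R | w < r ∧ r < w'} * d < w' - w) :
    (#W - 1 : ℝ) * c + #R * d < b - a := by
  induction W using Finset.strongInduction generalizing b R with
  | H W ih =>
  have haW' : a ∈ W.erase b := mem_erase.2 ⟨hab.ne, ha⟩
  set b' := (W.erase b).max' ⟨a, haW'⟩
  have hb'W' : b' ∈ W.erase b := max'_mem _ _
  have hb'W : b' ∈ W := mem_of_mem_erase hb'W'
  have hb'b : b' < b := (hW b' hb'W).2.lt_of_ne (ne_of_mem_erase hb'W')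
  have hlast := hgap b' hb'W b hb hb'b fun x hx hx' =>
    hx'.1.not_ge (le_max' _ x (mem_erase.2 ⟨hx'.2.ne, hx⟩))
  have hsplit := card_eq_card_filter_lt_add_card_filter_lt_and_lt fun r hr =>
    ⟨fun h => (hR r hr).2.2 (h ▸ hb'W), (hR r hr).2.1⟩
  have hcard : (#W - 1 : ℝ) = #(W.erase b) := by
    rw [card_erase_of_mem hb, Nat.cast_sub (card_pos.2 ⟨a, ha⟩), Nat.cast_one]
  suffices (#(W.erase b) - 1 : ℝ) * c + #{r ∈ R | r < b'} * d ≤ b' - a by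
    rw [hcard, hsplit]
    push_cast
    linarith
  obtain hab' | hab' : a = b' ∨ a < b' := (le_max' _ a haW').eq_or_lt
  · have hinit : W.erase b = {a} := eq_singleton_iff_unique_mem.2
      ⟨haW', fun x hx => le_antisymm (hab' ▸ le_max' _ x hx) (hW x (mem_of_mem_erase hx)).1⟩
    have hfirst : {r ∈ R | r < b'} = ∅ :=
      filter_eq_empty_iff.2 fun r hr => not_lt.2 (hab' ▸ (hR r hr).1.le)
    simp [hinit, hfirst, hab']
  refine (ih (W.erase b) (erase_ssubset hb) haW' hb'W' hab'
    (fun w hw => ⟨(hW w (mem_of_mem_erase hw)).1, le_max' _ w hw⟩)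
    (R := {r ∈ R | r < b'}) (fun r hr => ?_) (fun w hw w' hw' hlt hcons => ?_)).le
  · rw [mem_filter] at hr
    exact ⟨(hR r hr.1).1, hr.2, fun h => (hR r hr.1).2.2 (mem_of_mem_erase h)⟩
  · have hw'b' : w' ≤ b' := le_max' _ w' hw'
    rw [filter_filter]
    convert hgap w (mem_of_mem_erase hw) w' (mem_of_mem_erase hw') hlt fun x hx => ?_ using 4
    · congr 1
      exact filter_congr fun r _ => ⟨fun h => h.2, fun h => ⟨h.2.trans_le hw'b', h⟩⟩
    · by_cases hxb : x = b
      · exact fun h => (h.2.trans_le hw'b').not_ge (hxb ▸ hb'b.le)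
      · exact hcons x (mem_erase.2 ⟨hxb, hx⟩)

theorem card_sub_one_mul_lt_of_lt_abs_sub {s : Finset ℝ} {t lo hi : ℝ} (hs : 1 < #s)
    (hmem : ∀ x ∈ s, lo ≤ x ∧ x ≤ hi) (hsep : ∀ x ∈ s, ∀ y ∈ s, x ≠ y → t < |x - y|) :
    (#s - 1 : ℝ) * t < hi - lo := by
  have hne : s.Nonempty := card_pos.1 (by omega)
  have key := card_sub_one_mul_add_card_mul_lt_of_gaps (d := 0) (R := ∅) (min'_mem s hne)
    (max'_mem s hne) (min'_lt_max'_of_card s hs) (fun w hw => ⟨min'_le s w hw, le_max' s w hw⟩)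
    (by simp) fun w hw w' hw' hlt _ => by
      simpa [abs_of_neg (sub_neg.2 hlt)] using hsep w hw w' hw' hlt.ne
  linarith [(hmem _ (min'_mem s hne)).1, (hmem _ (max'_mem s hne)).2, key]

theorem pi_div_three_add_card_mul_lt_of_hubs {S : Finset ℝ} {w w' : ℝ} (hww' : π / 3 < w' - w)
    (hS : ∀ r ∈ S, w < r ∧ r < w')
    (hsep : ∀ r ∈ S, ∀ r' ∈ S, r ≠ r' → 2 * π / 13 < |r - r'|)
    (hhub : ∀ r ∈ S, ∃ h, |r - h| ≤ π / 4 ∧ π / 3 < |h - w| ∧ π / 3 < |h - w'|) :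
    π / 3 + #S * (π / 12) < w' - w := by
  -- A point with a hub lies `π / 12` inside the gap, whose length then exceeds `2π / 3`: enough
  -- for four points; from five points on, their `2π / 13` spacing takes over.
  have hinner : ∀ r ∈ S, w + π / 12 ≤ r ∧ r ≤ w' - π / 12 ∧ 2 * π / 3 < w' - w := by
    intro r hr
    obtain ⟨h, hrh, hhw, hhw'⟩ := hhub r hr
    rw [abs_le] at hrh
    rw [lt_abs] at hhw hhw'
    have := hS r hr
    refine ⟨?_, ?_, ?_⟩ <;> rcases hhw with hhw | hhw <;> rcases hhw' with hhw' | hhw' <;> linarith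
  rcases S.eq_empty_or_nonempty with rfl | ⟨r, hr⟩
  · simpa using hww'
  have hpi := pi_pos
  by_cases hS4 : #S ≤ 4
  · have : (#S : ℝ) ≤ 4 := by exact_mod_cast hS4
    nlinarith [(hinner r hr).2.2]
  · have h5 : (5 : ℝ) ≤ #S := by exact_mod_cast (by omega : 5 ≤ #S)
    have := card_sub_one_mul_lt_of_lt_abs_sub (by omega)
      (fun x hx => ⟨(hinner x hx).1, (hinner x hx).2.1⟩) hsep
    nlinarith

theorem card_sub_one_mul_pi_div_three_add_card_mul_lt_of_hubs {W R : Finset ℝ} {a b : ℝ}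
    (ha : a ∈ W) (hb : b ∈ W) (hab : a < b) (hW : ∀ w ∈ W, a ≤ w ∧ w ≤ b)
    (hWsep : ∀ w ∈ W, ∀ w' ∈ W, w ≠ w' → π / 3 < |w - w'|) (hR : ∀ r ∈ R, a ≤ r ∧ r ≤ b)
    (hRsep : ∀ r ∈ R, ∀ r' ∈ R, r ≠ r' → 2 * π / 13 < |r - r'|)
    (hhub : ∀ r ∈ R, ∃ h, |r - h| ≤ π / 4 ∧ ∀ w ∈ W, π / 3 < |h - w|) :
    (#W - 1 : ℝ) * (π / 3) + #R * (π / 12) < b - a := by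
  have hRW : ∀ r ∈ R, ∀ w ∈ W, r ≠ w := by
    rintro r hr w hw rfl
    obtain ⟨h, hrh, hhw⟩ := hhub r hr
    rw [abs_sub_comm] at hrh
    linarith [hhw r hw, pi_pos]
  refine card_sub_one_mul_add_card_mul_lt_of_gaps ha hb hab hW (fun r hr => ⟨lt_of_le_of_ne
    (hR r hr).1 (hRW r hr a ha).symm, lt_of_le_of_ne (hR r hr).2 (hRW r hr b hb),
      fun hrW => hRW r hr r hrW rfl⟩) fun w hw w' hw' hlt _ => ?_
  refine pi_div_three_add_card_mul_lt_of_hubs ?_ (fun r hr => (mem_filter.1 hr).2)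
    (fun r hr r' hr' => hRsep r (mem_filter.1 hr).1 r' (mem_filter.1 hr').1) fun r hr => ?_
  · simpa [abs_of_neg (sub_neg.2 hlt)] using hWsep w hw w' hw' hlt.ne
  · obtain ⟨h, hrh, hhw⟩ := hhub r (mem_filter.1 hr).1
    exact ⟨h, hrh, hhw w hw, hhw w' hw'⟩

theorem Real.Angle.abs_toReal_coe_le (θ : ℝ) : |(θ : Real.Angle).toReal| ≤ |θ| := by
  by_cases h : θ ∈ Set.Ioc (-π) π
  · rw [Real.Angle.toReal_coe_eq_self_iff_mem_Ioc.2 h]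
  · refine (Real.Angle.abs_toReal_le_pi _).trans ?_
    rw [Set.mem_Ioc, not_and_or, not_lt, not_le] at h
    rcases h with h | h
    · rw [abs_of_neg (by linarith [pi_pos])]; linarith
    · rw [abs_of_pos (by linarith [pi_pos])]; exact h.le

theorem Real.Angle.two_pi_le_abs_sub_of_coe_eq {θ ψ : ℝ} (h : (θ : Real.Angle) = ψ)
    (hne : θ ≠ ψ) : 2 * π ≤ |θ - ψ| := by
  obtain ⟨k, hk⟩ := Real.Angle.angle_eq_iff_two_pi_dvd_sub.1 h
  have hk0 : k ≠ 0 := by rintro rfl; simp [sub_eq_zero.not.2 hne] at hk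
  rw [hk, abs_mul, abs_of_pos two_pi_pos, ← Int.cast_abs]
  exact le_mul_of_one_le_right two_pi_pos.le (by exact_mod_cast Int.one_le_abs hk0)

namespace Complex

theorem angle_le_abs_sub_of_coe_eq_arg {x y : ℂ} (hx : x ≠ 0) (hy : y ≠ 0) {θ ψ : ℝ}
    (hθ : (θ : Real.Angle) = x.arg) (hψ : (ψ : Real.Angle) = y.arg) : angle x y ≤ |θ - ψ| := by
  rw [angle_eq_abs_arg hx hy, ← arg_coe_angle_toReal_eq_arg, arg_div_coe_angle hx hy, ← hθ, ← hψ,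
    ← Real.Angle.coe_sub]
  exact Real.Angle.abs_toReal_coe_le _

theorem exists_coe_eq_arg_abs_sub_eq_angle {x y : ℂ} (hx : x ≠ 0) (hy : y ≠ 0) {θ : ℝ}
    (hθ : (θ : Real.Angle) = x.arg) : ∃ ψ : ℝ, (ψ : Real.Angle) = y.arg ∧ |θ - ψ| = angle x y :=
  ⟨θ - (x / y).arg, by rw [Real.Angle.coe_sub, arg_div_coe_angle hx hy, hθ]; abel,
    by rw [sub_sub_cancel, angle_eq_abs_arg hx hy]⟩

/-- Cut the circle open at `x i₀`: `W` holds a lift of the direction of each `x i` to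
`(a, a + 2π]`, and also `a`, which represents the direction of `x i₀` a second time. -/
theorem exists_lift_of_lt_angle {ι : Type*} {s : Finset ι} {x : ι → ℂ} {t : ℝ} (ht₀ : 0 ≤ t)
    (ht : t < 2 * π) (hx : ∀ i ∈ s, x i ≠ 0)
    (hsep : ∀ i ∈ s, ∀ j ∈ s, i ≠ j → t < angle (x i) (x j)) {i₀ : ι} (hi₀ : i₀ ∈ s) :
    ∃ a : ℝ, ∃ W : Finset ℝ, a ∈ W ∧ a + 2 * π ∈ W ∧ (∀ w ∈ W, a ≤ w ∧ w ≤ a + 2 * π) ∧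
      #W = #s + 1 ∧ (∀ w ∈ W, ∀ w' ∈ W, w ≠ w' → t < |w - w'|) ∧
      ∀ w ∈ W, ∃ i ∈ s, (w : Real.Angle) = (x i).arg := by
  set a := (x i₀).arg - 2 * π
  set θ : ι → ℝ := fun i => toIocMod two_pi_pos a (x i).arg
  have hθ : ∀ i, (θ i : Real.Angle) = (x i).arg := fun i => Real.Angle.coe_toIocMod _ _
  have hθmem : ∀ i, θ i ∈ Set.Ioc a (a + 2 * π) := fun i => toIocMod_mem_Ioc _ _ _
  have hθi₀ : θ i₀ = a + 2 * π := by
    rw [show a + 2 * π = (x i₀).arg by ring]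
    exact (toIocMod_eq_self _).2 ⟨by linarith [pi_pos], by linarith⟩
  have hrep : ∀ w ∈ insert a (s.image θ), ∃ i ∈ s, (w : Real.Angle) = (x i).arg := by
    intro w hw
    rcases mem_insert.1 hw with rfl | hw
    · exact ⟨i₀, hi₀, by simp [a, Real.Angle.coe_sub, Real.Angle.coe_two_pi]⟩
    · obtain ⟨i, hi, rfl⟩ := mem_image.1 hw
      exact ⟨i, hi, hθ i⟩
  refine ⟨a, insert a (s.image θ), mem_insert_self _ _,
    mem_insert_of_mem (hθi₀ ▸ mem_image_of_mem θ hi₀), fun w hw => ?_, ?_,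
    fun w hw w' hw' hne => ?_, hrep⟩
  · rcases mem_insert.1 hw with rfl | hw
    · constructor <;> linarith [pi_pos]
    · obtain ⟨i, -, rfl⟩ := mem_image.1 hw
      exact ⟨(hθmem i).1.le, (hθmem i).2⟩
  · rw [card_insert_of_notMem, card_image_of_injOn]
    · intro i hi j hj hij
      by_contra hne
      have := (hsep i hi j hj hne).trans_le
        (angle_le_abs_sub_of_coe_eq_arg (hx i hi) (hx j hj) (hθ i) (hθ j))
      simp only [hij, sub_self, abs_zero] at this
      linarith
    · intro h
      obtain ⟨i, -, hi⟩ := mem_image.1 h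
      exact (hθmem i).1.ne' hi
  · obtain ⟨i, hi, hwi⟩ := hrep w hw
    obtain ⟨j, hj, hwj⟩ := hrep w' hw'
    by_cases hij : i = j
    · subst hij
      exact ht.trans_le (Real.Angle.two_pi_le_abs_sub_of_coe_eq (hwi.trans hwj.symm) hne)
    · exact (hsep i hi j hj hij).trans_le
        (angle_le_abs_sub_of_coe_eq_arg (hx i hi) (hx j hj) hwi hwj)

theorem card_mul_lt_two_pi_of_lt_angle {ι : Type*} (s : Finset ι) (x : ι → ℂ) {t : ℝ}
    (ht₀ : 0 ≤ t) (ht : t < 2 * π) (hx : ∀ i ∈ s, x i ≠ 0)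
    (hsep : ∀ i ∈ s, ∀ j ∈ s, i ≠ j → t < angle (x i) (x j)) : #s * t < 2 * π := by
  rcases s.eq_empty_or_nonempty with rfl | ⟨i₀, hi₀⟩
  · simpa using two_pi_pos
  obtain ⟨a, W, ha, hb, hW, hcard, hWsep, -⟩ := exists_lift_of_lt_angle ht₀ ht hx hsep hi₀
  have hs : 0 < #s := card_pos.2 ⟨i₀, hi₀⟩
  have := card_sub_one_mul_lt_of_lt_abs_sub (by omega) hW hWsep
  rw [hcard] at this
  push_cast at this
  linarith

theorem four_mul_card_add_card_lt_of_angle {ι κ : Type*} (I : Finset ι) (x : ι → ℂ) (R : Finset κ)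
    (y : κ → ℂ) (hI : I.Nonempty) (hx : ∀ i ∈ I, x i ≠ 0)
    (hIsep : ∀ i ∈ I, ∀ j ∈ I, i ≠ j → π / 3 < angle (x i) (x j)) (hy : ∀ r ∈ R, y r ≠ 0)
    (hRsep : ∀ r ∈ R, ∀ r' ∈ R, r ≠ r' → 2 * π / 13 < angle (y r) (y r'))
    (hhub : ∀ r ∈ R, ∃ h : ℂ, h ≠ 0 ∧ angle (y r) h ≤ π / 4 ∧ ∀ i ∈ I, π / 3 < angle h (x i)) :
    4 * #I + #R < 24 := by
  have hpi := pi_pos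
  obtain ⟨i₀, hi₀⟩ := hI
  obtain ⟨a, W, ha, hb, hW, hcard, hWsep, hWrep⟩ :=
    exists_lift_of_lt_angle (by positivity) (by linarith) hx hIsep hi₀
  set ρ : κ → ℝ := fun r => toIocMod two_pi_pos a (y r).arg
  have hρ : ∀ r, (ρ r : Real.Angle) = (y r).arg := fun r => Real.Angle.coe_toIocMod _ _
  have hρsep : ∀ r ∈ R, ∀ r' ∈ R, r ≠ r' → 2 * π / 13 < |ρ r - ρ r'| := fun r hr r' hr' hne =>
    (hRsep r hr r' hr' hne).trans_le
      (angle_le_abs_sub_of_coe_eq_arg (hy r hr) (hy r' hr') (hρ r) (hρ r'))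
  have hinj : Set.InjOn ρ R := by
    intro r hr r' hr' h
    by_contra hne
    have := hρsep r hr r' hr' hne
    rw [h, sub_self, abs_zero] at this
    linarith
  have key := card_sub_one_mul_pi_div_three_add_card_mul_lt_of_hubs (R := R.image ρ) ha hb
    (by linarith) hW hWsep ?_ ?_ ?_
  · rw [hcard, card_image_of_injOn hinj] at key
    push_cast at key
    have : ((4 * #I + #R : ℕ) : ℝ) < 24 := by push_cast; nlinarith
    exact_mod_cast this
  · simp only [mem_image]
    rintro _ ⟨r, -, rfl⟩
    exact ⟨(toIocMod_mem_Ioc _ _ _).1.le, (toIocMod_mem_Ioc _ _ _).2⟩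
  · simp only [mem_image]
    rintro _ ⟨r, hr, rfl⟩ _ ⟨r', hr', rfl⟩ hne
    exact hρsep r hr r' hr' fun h => hne (h ▸ rfl)
  · simp only [mem_image]
    rintro _ ⟨r, hr, rfl⟩
    obtain ⟨h, hh, hrh, hhI⟩ := hhub r hr
    obtain ⟨ψ, hψ, hρψ⟩ := exists_coe_eq_arg_abs_sub_eq_angle (hy r hr) hh (hρ r)
    refine ⟨ψ, hρψ ▸ hrh, fun w hw => ?_⟩
    obtain ⟨i, hi, hwi⟩ := hWrep w hw
    exact (hhI i hi).trans_le (angle_le_abs_sub_of_coe_eq_arg hh (hx i hi) hψ hwi)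

end Complex

theorem three_div_four_lt_cos_two_pi_div_nine : 3 / 4 < cos (2 * π / 9) := by
  have := one_sub_sq_div_two_le_cos (x := 2 * π / 9)
  nlinarith [pi_lt_d2, pi_pos]

theorem five_mul_sqrt_two_div_eight_lt_cos_two_pi_div_thirteen :
    5 * √2 / 8 < cos (2 * π / 13) := by
  -- `1 - x ^ 2 / 2 ≤ cos x` is too weak at `x = 2π / 13`; use it at `π / 13` and double the angle.
  have hcos : cos (2 * π / 13) = 2 * cos (π / 13) ^ 2 - 1 := by
    rw [← cos_two_mul]; ring_nf
  have hhalf : 1 - (π / 13) ^ 2 / 2 ≤ cos (π / 13) := one_sub_sq_div_two_le_cos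
  have hsqrt : √2 < 1.4143 := by rw [sqrt_lt' (by norm_num)]; norm_num
  have hL : 0.9706 < 1 - (π / 13) ^ 2 / 2 := by nlinarith [pi_lt_d2, pi_pos]
  have := pow_lt_pow_left₀ (hL.trans_le hhalf) (by norm_num) two_ne_zero
  rw [hcos]
  linarith

namespace InnerProductGeometry

variable {V : Type*} [NormedAddCommGroup V] [InnerProductSpace ℝ V]

theorem lt_angle_of_cos_angle_lt {x y : V} {t : ℝ} (ht₀ : 0 ≤ t) (htπ : t ≤ π)
    (h : cos (angle x y) < cos t) : t < angle x y :=
  (strictAntiOn_cos.lt_iff_gt ⟨angle_nonneg x y, angle_le_pi x y⟩ ⟨ht₀, htπ⟩).1 h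

theorem pi_div_three_lt_angle_of_norm_le_one {x y : V} (hx : ‖x‖ ≤ 1) (hy : ‖y‖ ≤ 1)
    (h : 1 < ‖x - y‖) : π / 3 < angle x y := by
  refine lt_angle_of_cos_angle_lt (by positivity) (by linarith [pi_pos]) ?_
  rw [cos_pi_div_three]
  have hlaw := norm_sub_sq_eq_norm_sq_add_norm_sq_sub_two_mul_norm_mul_norm_mul_cos_angle x y
  by_contra hc
  nlinarith [mul_nonneg (norm_nonneg x) (norm_nonneg y),
    mul_nonneg (sub_nonneg.2 hx) (sub_nonneg.2 hy), mul_nonneg (norm_nonneg x) (sub_nonneg.2 hy),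
    mul_nonneg (norm_nonneg y) (sub_nonneg.2 hx)]

-- `3 / 4` is the largest value of `(‖x‖² + ‖y‖² - 1) / (2‖x‖‖y‖)` on `[1, √2]²`, at `(√2, √2)`.
theorem two_pi_div_nine_lt_angle_of_norm_le_sqrt_two {x y : V} (hx₁ : 1 ≤ ‖x‖) (hx₂ : ‖x‖ ≤ √2)
    (hy₁ : 1 ≤ ‖y‖) (hy₂ : ‖y‖ ≤ √2) (h : 1 < ‖x - y‖) : 2 * π / 9 < angle x y := by
  refine lt_angle_of_cos_angle_lt (by positivity) (by linarith [pi_pos])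
    (lt_of_le_of_lt ?_ three_div_four_lt_cos_two_pi_div_nine)
  have hlaw := norm_sub_sq_eq_norm_sq_add_norm_sq_sub_two_mul_norm_mul_norm_mul_cos_angle x y
  have hs : √2 ^ 2 = 2 := sq_sqrt (by norm_num)
  by_contra hc
  nlinarith [mul_nonneg (sub_nonneg.2 hx₂) (sub_nonneg.2 hy₂),
    mul_nonneg (sub_nonneg.2 hx₁) (sub_nonneg.2 hx₂),
    mul_nonneg (sub_nonneg.2 hy₁) (sub_nonneg.2 hy₂), sq_nonneg (‖x‖ - ‖y‖),
    mul_pos (one_pos.trans_le hx₁) (one_pos.trans_le hy₁)]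

-- `5√2 / 8` is the largest value of `(‖x‖² + ‖y‖² - 1) / (2‖x‖‖y‖)` on `[√2, 2]²`, at `(√2, 2)`;
-- after squaring, the bound is a rational inequality in `‖x‖²` and `‖y‖²`.
theorem two_pi_div_thirteen_lt_angle_of_norm_le_two {x y : V} (hx₁ : √2 ≤ ‖x‖) (hx₂ : ‖x‖ ≤ 2)
    (hy₁ : √2 ≤ ‖y‖) (hy₂ : ‖y‖ ≤ 2) (h : 1 < ‖x - y‖) : 2 * π / 13 < angle x y := by
  refine lt_angle_of_cos_angle_lt (by positivity) (by linarith [pi_pos])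
    (lt_of_le_of_lt ?_ five_mul_sqrt_two_div_eight_lt_cos_two_pi_div_thirteen)
  have hlaw := norm_sub_sq_eq_norm_sq_add_norm_sq_sub_two_mul_norm_mul_norm_mul_cos_angle x y
  have hs : √2 ^ 2 = 2 := sq_sqrt (by norm_num)
  have hs0 : 0 < √2 := by positivity
  have hx₀ : 0 < ‖x‖ := hs0.trans_le hx₁
  have hy₀ : 0 < ‖y‖ := hs0.trans_le hy₁
  have hxx : 2 ≤ ‖x‖ ^ 2 := hs ▸ pow_le_pow_left₀ hs0.le hx₁ 2
  have hyy : 2 ≤ ‖y‖ ^ 2 := hs ▸ pow_le_pow_left₀ hs0.le hy₁ 2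
  have hxx' : ‖x‖ ^ 2 ≤ 4 := by nlinarith
  have hyy' : ‖y‖ ^ 2 ≤ 4 := by nlinarith
  by_contra hc
  have h1 : 5 * √2 / 4 * (‖x‖ * ‖y‖) < ‖x‖ ^ 2 + ‖y‖ ^ 2 - 1 := by
    nlinarith [mul_pos hx₀ hy₀]
  have h2 := pow_lt_pow_left₀ h1 (by positivity) two_ne_zero
  rw [mul_pow, div_pow, mul_pow, hs, mul_pow] at h2
  nlinarith [mul_nonneg (sub_nonneg.2 hxx) (sub_nonneg.2 hxx'),
    mul_nonneg (sub_nonneg.2 hyy) (sub_nonneg.2 hyy'),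
    mul_nonneg (sub_nonneg.2 hxx') (sub_nonneg.2 hyy'),
    mul_nonneg (sub_nonneg.2 hxx) (sub_nonneg.2 hyy)]

theorem angle_le_pi_div_four_of_sqrt_two_le_norm {x y : V} (hx : √2 ≤ ‖x‖) (h : ‖x - y‖ ≤ 1) :
    angle x y ≤ π / 4 := by
  have hs : √2 ^ 2 = 2 := sq_sqrt (by norm_num)
  have hy0 : 0 < ‖y‖ := norm_pos_iff.2 fun hy => by
    rw [hy, sub_zero] at h
    linarith [one_lt_sqrt_two]
  have hx0 : 0 < ‖x‖ := (sqrt_pos.2 two_pos).trans_le hx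
  rw [← strictAntiOn_cos.le_iff_ge ⟨by positivity, by linarith [pi_pos]⟩
    ⟨angle_nonneg x y, angle_le_pi x y⟩, cos_pi_div_four]
  have hlaw := norm_sub_sq_eq_norm_sq_add_norm_sq_sub_two_mul_norm_mul_norm_mul_cos_angle x y
  have hxx : 2 ≤ ‖x‖ ^ 2 := hs ▸ pow_le_pow_left₀ (sqrt_nonneg 2) hx 2
  by_contra hc
  nlinarith [sq_nonneg (√2 * ‖y‖ - ‖x‖), mul_pos hx0 hy0, norm_nonneg (x - y)]

end InnerProductGeometry

theorem card_le_eight_of_norm_le_sqrt_two {ι : Type*} (s : Finset ι) (z : ι → ℂ)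
    (hs : ∀ i ∈ s, 1 ≤ ‖z i‖ ∧ ‖z i‖ ≤ √2)
    (hsep : ∀ i ∈ s, ∀ j ∈ s, i ≠ j → 1 < ‖z i - z j‖) : #s ≤ 8 := by
  have := Complex.card_mul_lt_two_pi_of_lt_angle s z (t := 2 * π / 9) (by positivity)
    (by linarith [pi_pos]) (fun i hi => norm_pos_iff.1 (one_pos.trans_le (hs i hi).1))
    fun i hi j hj hij => two_pi_div_nine_lt_angle_of_norm_le_sqrt_two (hs i hi).1 (hs i hi).2
      (hs j hj).1 (hs j hj).2 (hsep i hi j hj hij)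
  have : (#s : ℝ) < 9 := by nlinarith [pi_pos]
  exact Nat.lt_succ_iff.1 (by exact_mod_cast this)

theorem card_le_twelve_of_sqrt_two_le_norm {ι : Type*} (s : Finset ι) (z : ι → ℂ)
    (hs : ∀ i ∈ s, √2 ≤ ‖z i‖ ∧ ‖z i‖ ≤ 2)
    (hsep : ∀ i ∈ s, ∀ j ∈ s, i ≠ j → 1 < ‖z i - z j‖) : #s ≤ 12 := by
  have := Complex.card_mul_lt_two_pi_of_lt_angle s z (t := 2 * π / 13) (by positivity)
    (by linarith [pi_pos]) (fun i hi => norm_pos_iff.1 ((sqrt_pos.2 two_pos).trans_le (hs i hi).1))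
    fun i hi j hj hij => two_pi_div_thirteen_lt_angle_of_norm_le_two (hs i hi).1 (hs i hi).2
      (hs j hj).1 (hs j hj).2 (hsep i hi j hj hij)
  have : (#s : ℝ) < 13 := by nlinarith [pi_pos]
  exact Nat.lt_succ_iff.1 (by exact_mod_cast this)

theorem four_mul_card_add_card_lt_of_norm {ι : Type*} (A B : Finset ι) (z : ι → ℂ)
    (hA2 : 2 ≤ #A) (hA : ∀ a ∈ A, ‖z a‖ ≤ 1)
    (hAsep : ∀ a ∈ A, ∀ a' ∈ A, a ≠ a' → 1 < ‖z a - z a'‖)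
    (hB : ∀ b ∈ B, √2 ≤ ‖z b‖ ∧ ‖z b‖ ≤ 2) (hBsep : ∀ b ∈ B, ∀ b' ∈ B, b ≠ b' → 1 < ‖z b - z b'‖)
    (hhub : ∀ b ∈ B, ∃ h : ℂ, ‖h‖ ≤ 1 ∧ ‖z b - h‖ ≤ 1 ∧ ∀ a ∈ A, 1 < ‖z a - h‖) :
    4 * #A + #B < 24 := by
  have hs := one_lt_sqrt_two
  have hA0 : ∀ a ∈ A, z a ≠ 0 := by
    intro a ha hza
    obtain ⟨a', ha', hne⟩ := exists_mem_ne (by omega : 1 < #A) a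
    have := hAsep a' ha' a ha hne
    rw [hza, sub_zero] at this
    linarith [hA a' ha']
  refine Complex.four_mul_card_add_card_lt_of_angle A z B z (card_pos.1 (by omega)) hA0
    (fun a ha a' ha' hne => pi_div_three_lt_angle_of_norm_le_one (hA a ha) (hA a' ha')
      (hAsep a ha a' ha' hne))
    (fun b hb => norm_pos_iff.1 (by linarith [hB b hb]))
    (fun b hb b' hb' hne => two_pi_div_thirteen_lt_angle_of_norm_le_two (hB b hb).1 (hB b hb).2
      (hB b' hb').1 (hB b' hb').2 (hBsep b hb b' hb' hne)) fun b hb => ?_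
  obtain ⟨h, hh, hbh, hAh⟩ := hhub b hb
  refine ⟨h, fun h0 => ?_, angle_le_pi_div_four_of_sqrt_two_le_norm (hB b hb).1 hbh, fun a ha =>
    pi_div_three_lt_angle_of_norm_le_one hh (hA a ha) (by rw [norm_sub_rev]; exact hAh a ha)⟩
  rw [h0, sub_zero] at hbh
  linarith [hB b hb]

theorem card_add_card_le_twenty_two {ι : Type*} (A B : Finset ι) (z : ι → ℂ)
    (hA : ∀ a ∈ A, ‖z a‖ ≤ 1) (hAsep : ∀ a ∈ A, ∀ a' ∈ A, a ≠ a' → 1 < ‖z a - z a'‖)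
    (hB : ∀ b ∈ B, 1 < ‖z b‖) (hBsep : ∀ b ∈ B, ∀ b' ∈ B, b ≠ b' → 1 < ‖z b - z b'‖)
    (hhub : ∀ b ∈ B, ∃ h : ℂ, ‖h‖ ≤ 1 ∧ ‖z b - h‖ ≤ 1 ∧ ∀ a ∈ A, 1 < ‖z a - h‖) :
    #A + #B ≤ 22 := by
  classical
  set B₁ := {b ∈ B | ‖z b‖ ≤ √2}
  set B₂ := {b ∈ B | ¬‖z b‖ ≤ √2}
  have hsplit : #B₁ + #B₂ = #B := card_filter_add_card_filter_not _
  have h₁ : #B₁ ≤ 8 := card_le_eight_of_norm_le_sqrt_two B₁ z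
    (fun b hb => ⟨(hB b (mem_filter.1 hb).1).le, (mem_filter.1 hb).2⟩)
    fun b hb b' hb' => hBsep b (mem_filter.1 hb).1 b' (mem_filter.1 hb').1
  have hhub₂ := fun b (hb : b ∈ B₂) => hhub b (mem_filter.1 hb).1
  have hB₂ : ∀ b ∈ B₂, √2 ≤ ‖z b‖ ∧ ‖z b‖ ≤ 2 := fun b hb => by
    obtain ⟨h, hh, hbh, -⟩ := hhub₂ b hb
    exact ⟨(not_le.1 (mem_filter.1 hb).2).le, by linarith [norm_sub_norm_le (z b) h]⟩
  have hB₂sep : ∀ b ∈ B₂, ∀ b' ∈ B₂, b ≠ b' → 1 < ‖z b - z b'‖ :=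
    fun b hb b' hb' => hBsep b (mem_filter.1 hb).1 b' (mem_filter.1 hb').1
  have h₂ : #B₂ ≤ 12 := card_le_twelve_of_sqrt_two_le_norm B₂ z hB₂ hB₂sep
  by_cases hA2 : #A ≤ 2
  · omega
  have := four_mul_card_add_card_lt_of_norm A B₂ z (by omega) hA hAsep hB₂ hB₂sep hhub₂
  omega

theorem IsUnitDiskGraph.exists_complex {V : Type*} {G : SimpleGraph V} (hG : IsUnitDiskGraph G)
    (v : V) : ∃ z : V → ℂ, z v = 0 ∧ ∀ u w, G.Adj u w ↔ u ≠ w ∧ ‖z u - z w‖ ≤ 1 := by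
  obtain ⟨p, hp⟩ := hG
  refine ⟨fun u => Complex.orthonormalBasisOneI.repr.symm (p u - p v), by simp, fun u w => ?_⟩
  rw [hp, ← map_sub, LinearIsometryEquiv.norm_map, sub_sub_sub_cancel_right, ← dist_eq_norm]

namespace SimpleGraph

variable {V : Type*} {G : SimpleGraph V}

theorem eq_of_adj_of_ncard_neighborSet_eq_one {u x y : V} (hu : (G.neighborSet u).ncard = 1)
    (hx : G.Adj u x) (hy : G.Adj u y) : x = y := by
  obtain ⟨w, hw⟩ := Set.ncard_eq_one.1 hu
  have hx' : x ∈ G.neighborSet u := hx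
  have hy' : y ∈ G.neighborSet u := hy
  rw [hw] at hx' hy'
  exact hx'.trans hy'.symm

theorem not_adj_of_ncard_neighborSet_eq_one {u v w : V} (hu : (G.neighborSet u).ncard = 1)
    (hvu : G.Adj v u) (hvw : G.Adj v w) : ¬G.Adj u w := fun huw =>
  hvw.ne (eq_of_adj_of_ncard_neighborSet_eq_one hu hvu.symm huw)

theorem edist_eq_two_of_dist_eq_two {u v : V} (h : G.dist u v = 2) : G.edist u v = 2 := by
  rw [← (Reachable.of_dist_ne_zero (h ▸ two_ne_zero)).coe_dist_eq_edist, h]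
  rfl

theorem ne_and_not_adj_of_dist_eq_two {u v : V} (h : G.dist u v = 2) : u ≠ v ∧ ¬G.Adj u v :=
  (edist_eq_two_iff.1 (edist_eq_two_of_dist_eq_two h)).imp_right And.left

theorem not_adj_of_ncard_neighborSet_eq_one_of_dist_eq_two {u v w : V}
    (hu : (G.neighborSet u).ncard = 1) (hvu : G.dist v u = 2) (hvw : G.dist v w = 2) :
    ¬G.Adj u w := by
  intro huw
  obtain ⟨-, -, m, hm⟩ := edist_eq_two_iff.1 (edist_eq_two_of_dist_eq_two hvu)
  rw [mem_commonNeighbors] at hm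
  exact (ne_and_not_adj_of_dist_eq_two hvw).2
    (eq_of_adj_of_ncard_neighborSet_eq_one hu hm.2 huw ▸ hm.1)

theorem exists_hub_of_dist_eq_two {u v : V} (hvu : G.dist v u = 2) :
    ∃ h, G.Adj v h ∧ G.Adj h u ∧ ∀ x, (G.neighborSet x).ncard = 1 → G.Adj v x → x ≠ h := by
  obtain ⟨hne, -, h, hh⟩ := edist_eq_two_iff.1 (edist_eq_two_of_dist_eq_two hvu)
  rw [mem_commonNeighbors] at hh
  refine ⟨h, hh.1, hh.2.symm, fun x hx hvx hxh => hne ?_⟩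
  subst hxh
  exact eq_of_adj_of_ncard_neighborSet_eq_one hx hvx.symm hh.2.symm

end SimpleGraph

/-- For any vertex `v` of a unit disk graph, the number `k` of degree-1 neighbors
of `v` plus the number `ℓ` of degree-1 vertices at graph distance exactly 2 from
`v` satisfies `k + ℓ ≤ 22`. -/
theorem k_ell_pendant {V : Type*} [Fintype V]
    (G : SimpleGraph V) (hG : IsUnitDiskGraph G) (v : V) :
    {u | G.Adj v u ∧ (G.neighborSet u).ncard = 1}.ncard +
      {u | (G.neighborSet u).ncard = 1 ∧ G.dist v u = 2}.ncard ≤ 22 := by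
  classical
  obtain ⟨z, hzv, hz⟩ := hG.exists_complex v
  have hfar : ∀ x y, x ≠ y → ¬G.Adj x y → 1 < ‖z x - z y‖ := fun x y hne hxy =>
    not_le.1 fun h => hxy ((hz x y).2 ⟨hne, h⟩)
  have hnear : ∀ x, G.Adj v x → ‖z x‖ ≤ 1 := fun x hx => by
    simpa [hzv] using ((hz x v).1 hx.symm).2
  rw [Set.ncard_eq_toFinset_card', Set.ncard_eq_toFinset_card', Set.toFinset_ofPred,
    Set.toFinset_ofPred]
  refine card_add_card_le_twenty_two _ _ z ?_ ?_ ?_ ?_ ?_ <;>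
    simp only [Finset.mem_filter, Finset.mem_univ, true_and]
  · exact fun a ha => hnear a ha.1
  · exact fun a ha a' ha' hne =>
      hfar a a' hne (SimpleGraph.not_adj_of_ncard_neighborSet_eq_one ha.2 ha.1 ha'.1)
  · intro b hb
    obtain ⟨hne, hnadj⟩ := SimpleGraph.ne_and_not_adj_of_dist_eq_two hb.2
    simpa [hzv] using hfar v b hne hnadj
  · exact fun b hb b' hb' hne => hfar b b' hne
      (SimpleGraph.not_adj_of_ncard_neighborSet_eq_one_of_dist_eq_two hb.1 hb.2 hb'.2)
  · intro b hb
    obtain ⟨h, hvh, hhb, hA⟩ := SimpleGraph.exists_hub_of_dist_eq_two hb.2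
    exact ⟨z h, hnear h hvh, by simpa using ((hz b h).1 hhb.symm).2, fun a ha =>
      hfar a h (hA a ha.2 ha.1) (SimpleGraph.not_adj_of_ncard_neighborSet_eq_one ha.2 ha.1 hvh)⟩
end

section
/- Every unit disk graph G admits an independent dominating set D such that |D| ≤ (44/9)·|D*|, where D* is a minimum dominating set of G. In particular, a 44/9-approximation to the minimum dominating set of a unit disk graph always exists among its independent dominating sets. -/
/-!
Take a maximal independent subset `D` of the dominating set `D*` and extend it to a maximal
independent set `D'` of the whole graph, which is then dominating. Every vertex of `D' \ D` lies in
the closed neighbourhood of some `u ∈ D* \ D`, and `u` also has a neighbour in `D`. In a unit disk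
graph an independent set inside a closed neighbourhood has at most five elements: the points lie in
a unit disk around `u` at mutual distance `> 1`, so seen from `u` any two of them subtend an angle
`> π/3`. Hence each such `u` accounts for at most four vertices of `D' \ D`, and
`|D'| ≤ |D| + 4 |D* \ D| ≤ 4 |D*|`.
-/

open Real Set

theorem Complex.cos_arg_sub_arg_lt_half {z w : ℂ} (hz : z ≠ 0) (hw : w ≠ 0) (hz1 : ‖z‖ ≤ 1)
    (hw1 : ‖w‖ ≤ 1) (hzw : 1 < ‖z - w‖) : Real.cos (z.arg - w.arg) < 1 / 2 := by
  have hz0 : 0 < ‖z‖ := norm_pos_iff.2 hz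
  have hw0 : 0 < ‖w‖ := norm_pos_iff.2 hw
  have hcos : ‖z‖ * ‖w‖ * Real.cos (z.arg - w.arg) = z.re * w.re + z.im * w.im := by
    rw [Real.cos_sub, Complex.cos_arg hz, Complex.cos_arg hw, Complex.sin_arg, Complex.sin_arg]
    field_simp
  have hsq : ‖z - w‖ ^ 2 = ‖z‖ ^ 2 + ‖w‖ ^ 2 - 2 * (z.re * w.re + z.im * w.im) := by
    simp only [Complex.sq_norm, Complex.normSq_apply, Complex.sub_re, Complex.sub_im]
    ring
  by_contra! h
  nlinarith [mul_le_mul_of_nonneg_left h (mul_pos hz0 hw0).le,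
    mul_nonneg (sub_nonneg.2 hz1) (sub_nonneg.2 hw1), mul_nonneg hz0.le (sub_nonneg.2 hz1),
    mul_nonneg hw0.le (sub_nonneg.2 hw1)]

theorem Real.mem_Ioo_of_cos_lt_half {θ : ℝ} (h0 : 0 < θ) (h2 : θ < 2 * π) (hθ : cos θ < 1 / 2) :
    θ ∈ Ioo (π / 3) (5 * π / 3) := by
  constructor
  · by_contra! h
    have := cos_le_cos_of_nonneg_of_le_pi h0.le (by linarith [pi_pos]) h
    linarith [cos_pi_div_three]
  · by_contra! h
    have := cos_le_cos_of_nonneg_of_le_pi (x := 2 * π - θ) (y := π / 3) (by linarith)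
      (by linarith [pi_pos]) (by linarith)
    rw [cos_two_pi_sub] at this
    linarith [cos_pi_div_three]

theorem Finset.exists_card_mul_le_sub_of_gap {T : Finset ℝ} (hT : T.Nonempty) {δ : ℝ}
    (hgap : ∀ x ∈ T, ∀ y ∈ T, x < y → δ < y - x) :
    ∃ a ∈ T, ∃ b ∈ T, ((T.card : ℝ) - 1) * δ ≤ b - a := by
  classical
  induction T using Finset.induction_on_max with
  | empty => exact absurd hT Finset.not_nonempty_empty
  | insert c s hc ih =>
    rcases s.eq_empty_or_nonempty with rfl | hs
    · exact ⟨c, mem_insert_self c ∅, c, mem_insert_self c ∅, by simp⟩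
    obtain ⟨a, ha, b, hb, hab⟩ :=
      ih hs fun x hx y hy => hgap x (mem_insert_of_mem hx) y (mem_insert_of_mem hy)
    have hbc := hgap b (mem_insert_of_mem hb) c (mem_insert_self c s) (hc b hb)
    refine ⟨a, mem_insert_of_mem ha, c, mem_insert_self c s, ?_⟩
    rw [card_insert_of_notMem fun h => lt_irrefl c (hc c h), Nat.cast_succ]
    linarith

theorem Finset.card_le_five_of_cos_sub_lt_half {T : Finset ℝ}
    (hT : ∀ x ∈ T, x ∈ Set.Ioc (-π) π) (hcos : ∀ x ∈ T, ∀ y ∈ T, x ≠ y → cos (y - x) < 1 / 2) :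
    T.card ≤ 5 := by
  by_contra! h
  have hgap : ∀ x ∈ T, ∀ y ∈ T, x < y → y - x ∈ Set.Ioo (π / 3) (5 * π / 3) :=
    fun x hx y hy hxy => mem_Ioo_of_cos_lt_half (by linarith)
      (by linarith [(hT x hx).1, (hT y hy).2]) (hcos x hx y hy hxy.ne)
  obtain ⟨a, ha, b, hb, hab⟩ := T.exists_card_mul_le_sub_of_gap (card_pos.1 (by omega))
    fun x hx y hy hxy => (hgap x hx y hy hxy).1
  have h6 : (6 : ℝ) ≤ T.card := by exact_mod_cast h
  have hab' : a < b := by nlinarith [pi_pos]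
  -- the five consecutive gaps and the wrap-around gap from `b` back to `a` all exceed `π / 3`
  nlinarith [pi_pos, (hgap a ha b hb hab').2]

theorem Complex.ncard_le_five_of_pairwise_one_lt_dist {s : Set ℂ} {c : ℂ}
    (hs : s ⊆ Metric.closedBall c 1) (hsep : s.Pairwise fun z w => 1 < dist z w) :
    s.ncard ≤ 5 := by
  have hc : ∀ z ∈ s, ∀ w ∈ s, z ≠ w → z - c ≠ 0 := by
    intro z hz w hw hzw hzc
    have := hsep hw hz hzw.symm
    rw [sub_eq_zero.1 hzc] at this
    linarith [Metric.mem_closedBall.1 (hs hw)]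
  have hcos : ∀ z ∈ s, ∀ w ∈ s, z ≠ w → Real.cos ((z - c).arg - (w - c).arg) < 1 / 2 :=
    fun z hz w hw hzw => Complex.cos_arg_sub_arg_lt_half (hc z hz w hw hzw)
      (hc w hw z hz hzw.symm)
      (by simpa [← dist_eq_norm] using hs hz) (by simpa [← dist_eq_norm] using hs hw)
      (by simpa [← dist_eq_norm] using hsep hz hw hzw)
  have hinj : InjOn (fun z => (z - c).arg) s := by
    intro z hz w hw hzw
    by_contra hne
    have := hcos z hz w hw hne
    simp only at hzw
    rw [hzw, sub_self, Real.cos_zero] at this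
    norm_num at this
  by_contra! h
  obtain ⟨t, hts, ht⟩ := exists_subset_card_eq h
  have htf : t.Finite := finite_of_ncard_pos (by omega)
  have := Finset.card_le_five_of_cos_sub_lt_half (T := htf.toFinset.image fun z => (z - c).arg)
    (by simp [Complex.neg_pi_lt_arg, Complex.arg_le_pi])
    (by simp only [Finset.mem_image, Finite.mem_toFinset]
        rintro _ ⟨z, hz, rfl⟩ _ ⟨w, hw, rfl⟩ hzw
        exact hcos w (hts hw) z (hts hz) (by rintro rfl; exact hzw rfl))
  rw [Finset.card_image_of_injOn (by simpa using hinj.mono hts),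
    ← ncard_eq_toFinset_card t htf] at this
  omega

section Graph

variable {V : Type*} {G : SimpleGraph V}

theorem exists_maximal_isIndependentSet_between [Finite V] {A B : Set V} (hBA : B ⊆ A)
    (hB : IsIndependentSet G B) :
    ∃ S, B ⊆ S ∧ S ⊆ A ∧ IsIndependentSet G S ∧ ∀ a ∈ A, a ∉ S → ∃ s ∈ S, G.Adj s a := by
  obtain ⟨S, ⟨hBS, hSA, hS⟩, hmax⟩ :=
    (toFinite {S | B ⊆ S ∧ S ⊆ A ∧ IsIndependentSet G S}).exists_maximalFor id _
      ⟨B, le_rfl, hBA, hB⟩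
  refine ⟨S, hBS, hSA, hS, fun a ha haS => ?_⟩
  by_contra! hna
  exact haS (hmax ⟨hBS.trans (subset_insert a S), insert_subset ha hSA,
    Set.Pairwise.insert hS fun s hs _ => ⟨fun h => hna s hs h.symm, hna s hs⟩⟩
    (subset_insert a S) (mem_insert a S))

theorem IsUnitDiskGraph.ncard_le_five {S : Set V} {u : V} (hG : IsUnitDiskGraph G)
    (hSu : S ⊆ insert u (G.neighborSet u)) (hS : IsIndependentSet G S) : S.ncard ≤ 5 := by
  obtain ⟨p, hp⟩ := hG
  let q : V → ℂ := fun v => Complex.orthonormalBasisOneI.repr.symm (p v)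
  have hq : ∀ v w, dist (q v) (q w) = dist (p v) (p w) := fun v w =>
    LinearIsometryEquiv.dist_map _ _ _
  have hsep : S.Pairwise fun v w => 1 < dist (q v) (q w) := fun v hv w hw hvw => by
    simpa [hq, hp, hvw] using hS hv hw hvw
  have hinj : InjOn q S := fun v hv w hw hvw => by
    by_contra hne
    have : 1 < dist (q v) (q w) := hsep hv hw hne
    rw [hvw, dist_self] at this
    norm_num at this
  rw [← hinj.ncard_image]
  refine Complex.ncard_le_five_of_pairwise_one_lt_dist (c := q u) ?_ ?_
  · rintro _ ⟨v, hv, rfl⟩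
    rcases hSu hv with rfl | huv
    · simp
    · simpa [hq] using (((hp u v).1 huv).2).trans_eq' (dist_comm _ _)
  · rintro _ ⟨v, hv, rfl⟩ _ ⟨w, hw, rfl⟩ hvw
    exact hsep hv hw fun h => hvw (h ▸ rfl)

theorem ncard_sdiff_le_mul_ncard_sdiff [Finite V] {k : ℕ}
    (hloc : ∀ u (S : Set V), S ⊆ insert u (G.neighborSet u) → IsIndependentSet G S →
      S.ncard ≤ k + 1)
    {Dstar D D' : Set V} (hDstar : IsDominatingSet G Dstar) (hDD' : D ⊆ D')
    (hD' : IsIndependentSet G D') (hD : ∀ u ∈ Dstar, u ∉ D → ∃ x ∈ D, G.Adj x u) :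
    (D' \ D).ncard ≤ k * (Dstar \ D).ncard := by
  set N : V → Set V := fun u => (D' \ D) ∩ insert u (G.neighborSet u)
  set F := (toFinite (Dstar \ D)).toFinset
  have hcover : D' \ D ⊆ ⋃ u ∈ F, N u := by
    rintro w ⟨hwD', hwD⟩
    simp only [mem_iUnion, Finite.mem_toFinset, exists_prop, F, N]
    by_cases hw : w ∈ Dstar
    · exact ⟨w, ⟨hw, hwD⟩, ⟨hwD', hwD⟩, mem_insert w _⟩
    obtain ⟨u, hu, huw⟩ := hDstar w hw
    have huD : u ∉ D := fun huD => hD' (hDD' huD) hwD' huw.ne huw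
    exact ⟨u, ⟨hu, huD⟩, ⟨hwD', hwD⟩, mem_insert_of_mem u huw⟩
  have hN : ∀ u ∈ F, (N u).ncard ≤ k := by
    intro u hu
    rw [Finite.mem_toFinset] at hu
    obtain ⟨x, hxD, hxu⟩ := hD u hu.1 hu.2
    have hxN : x ∉ N u := fun h => h.1.2 hxD
    have := hloc u (insert x (N u))
      (insert_subset (mem_insert_of_mem u hxu.symm) inter_subset_right)
      (Set.Pairwise.mono (insert_subset (hDD' hxD) fun w hw => hw.1.1) hD')
    rw [ncard_insert_of_notMem hxN] at this
    omega
  calc (D' \ D).ncard ≤ (⋃ u ∈ F, N u).ncard := ncard_le_ncard hcover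
    _ ≤ ∑ u ∈ F, (N u).ncard := F.set_ncard_biUnion_le N
    _ ≤ ∑ _u ∈ F, k := Finset.sum_le_sum hN
    _ = k * (Dstar \ D).ncard := by
      rw [Finset.sum_const, smul_eq_mul, mul_comm, ncard_eq_toFinset_card _]

theorem exists_isIndependentSet_isDominatingSet_ncard_le [Finite V] {k : ℕ} (hk : 1 ≤ k)
    (hloc : ∀ u (S : Set V), S ⊆ insert u (G.neighborSet u) → IsIndependentSet G S →
      S.ncard ≤ k + 1)
    {Dstar : Set V} (hDstar : IsDominatingSet G Dstar) :
    ∃ D, IsIndependentSet G D ∧ IsDominatingSet G D ∧ D.ncard ≤ k * Dstar.ncard := by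
  obtain ⟨D, -, hDDstar, hD, hDmax⟩ :=
    exists_maximal_isIndependentSet_between (empty_subset Dstar) (pairwise_empty _)
  obtain ⟨D', hDD', -, hD', hD'max⟩ := exists_maximal_isIndependentSet_between (subset_univ D) hD
  refine ⟨D', hD', fun v hv => hD'max v (mem_univ v) hv, ?_⟩
  rw [← ncard_sdiff_add_ncard_of_subset hDD', ← ncard_sdiff_add_ncard_of_subset hDDstar, mul_add]
  exact add_le_add (ncard_sdiff_le_mul_ncard_sdiff hloc hDstar hDD' hD' hDmax)
    (Nat.le_mul_of_pos_left _ hk)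

end Graph

theorem exists_indep_dominating_44_9_approx_general {V : Type*} [Fintype V]
    (G : SimpleGraph V) (hG : IsUnitDiskGraph G)
    (Dstar : Set V) (hDstar : IsDominatingSet G Dstar) :
    ∃ D : Set V, IsIndependentSet G D ∧ IsDominatingSet G D ∧
      (D.ncard : ℝ) ≤ 44 / 9 * Dstar.ncard := by
  obtain ⟨D, hD, hDdom, hcard⟩ := exists_isIndependentSet_isDominatingSet_ncard_le (k := 4)
    (by norm_num) (fun _ _ => hG.ncard_le_five) hDstar
  refine ⟨D, hD, hDdom, ?_⟩
  calc (D.ncard : ℝ) ≤ 4 * Dstar.ncard := by exact_mod_cast hcard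
    _ ≤ 44 / 9 * Dstar.ncard := by gcongr; norm_num

/-- Every unit disk graph admits an independent dominating set whose size is at
most `44/9` times the size of a minimum dominating set. -/
theorem exists_indep_dominating_44_9_approx {V : Type*} [Fintype V]
    (G : SimpleGraph V) (hG : IsUnitDiskGraph G)
    (Dstar : Set V) (hDstar : IsDominatingSet G Dstar)
    (hmin : ∀ D' : Set V, IsDominatingSet G D' → Dstar.ncard ≤ D'.ncard) :
    ∃ D : Set V, IsIndependentSet G D ∧ IsDominatingSet G D ∧
      (D.ncard : ℝ) ≤ 44 / 9 * Dstar.ncard :=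
  exists_indep_dominating_44_9_approx_general G hG Dstar hDstar
end

section
/- Every unit disk graph G admits an independent dominating set D such that |D| ≤ (43/9)·|D*|, where D* is a minimum dominating set of G. In particular, a 43/9-approximation to the minimum dominating set of a unit disk graph always exists among its independent dominating sets. -/
/-!
Take a maximal independent subset `I` of `Dstar` and extend it to a maximal independent set `D`
of `G`, which is then an independent dominating set. A vertex of `D \ I` lies outside `Dstar`
(it would have a neighbour in `I`), so it has a neighbour in `Dstar \ I`. At most five points of
mutual distance `> 1` fit in a closed unit disk, so a vertex of `Dstar \ I` has at most five
neighbours in `D`, one of them in `I`. Hence `|D \ I| ≤ 4 |Dstar \ I|`, and `|D| ≤ 4 |Dstar|`.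
-/

section

open Real

lemma exists_pair_half_le_cos_sub (θ : Fin 6 → ℝ) (hθ : ∀ i, θ i ∈ Set.Ioc (-π) π) :
    ∃ i j, i ≠ j ∧ 1 / 2 ≤ cos (θ i - θ j) := by
  set σ := Tuple.sort θ
  set g := θ ∘ σ
  have hg : Monotone g := Tuple.monotone_sort θ
  have hne : ∀ {k l : Fin 6}, k ≠ l → σ l ≠ σ k := fun h e => h (σ.injective e).symm
  by_contra! hfar
  -- Consecutive sorted angles are more than `π / 3` apart, so the extreme ones are within `π / 3`
  -- of each other modulo `2π`.
  have gap : ∀ k l : Fin 6, k < l → π / 3 < g l - g k := by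
    intro k l hkl
    by_contra! hle
    have hcos := cos_le_cos_of_nonneg_of_le_pi (sub_nonneg.2 (hg hkl.le)) (by linarith [pi_pos]) hle
    have hlt : cos (g l - g k) < 1 / 2 := hfar (σ l) (σ k) (hne hkl.ne)
    linarith [cos_pi_div_three]
  have h5 : g 5 ≤ π := (hθ (σ 5)).2
  have h0 : -π < g 0 := (hθ (σ 0)).1
  have hspread : 5 * (π / 3) < g 5 - g 0 := by
    linarith [gap 0 1 (by decide), gap 1 2 (by decide), gap 2 3 (by decide), gap 3 4 (by decide),
      gap 4 5 (by decide)]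
  have hcos := cos_le_cos_of_nonneg_of_le_pi (x := 2 * π - (g 5 - g 0)) (y := π / 3) (by linarith)
    (by linarith [pi_pos]) (by linarith)
  have hlt : cos (g 5 - g 0) < 1 / 2 := hfar (σ 5) (σ 0) (hne (by decide))
  rw [cos_two_pi_sub, cos_pi_div_three] at hcos
  linarith

end

namespace Complex

lemma norm_mul_norm_mul_cos_arg_sub (z w : ℂ) :
    ‖z‖ * ‖w‖ * Real.cos (arg z - arg w) = z.re * w.re + z.im * w.im := by
  rcases eq_or_ne z 0 with rfl | hz
  · simp
  rcases eq_or_ne w 0 with rfl | hw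
  · simp
  have hz' : ‖z‖ ≠ 0 := norm_ne_zero_iff.2 hz
  have hw' : ‖w‖ ≠ 0 := norm_ne_zero_iff.2 hw
  rw [Real.cos_sub, cos_arg hz, cos_arg hw, sin_arg, sin_arg]
  field_simp

lemma norm_sub_le_one_of_half_le_cos_arg_sub {z w : ℂ} (hz : ‖z‖ ≤ 1) (hw : ‖w‖ ≤ 1)
    (h : 1 / 2 ≤ Real.cos (arg z - arg w)) : ‖z - w‖ ≤ 1 := by
  have hinner := norm_mul_norm_mul_cos_arg_sub z w
  have hsq : ‖z - w‖ ^ 2 = ‖z‖ ^ 2 + ‖w‖ ^ 2 - 2 * (z.re * w.re + z.im * w.im) := by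
    rw [Complex.sq_norm, Complex.sq_norm, Complex.sq_norm, normSq_apply, normSq_apply, normSq_apply]
    simp only [sub_re, sub_im]
    ring
  have hz0 := norm_nonneg z
  have hw0 := norm_nonneg w
  -- `‖z - w‖² ≤ ‖z‖² + ‖w‖² - ‖z‖‖w‖ ≤ max ‖z‖ ‖w‖ ^ 2 ≤ 1`
  nlinarith [norm_nonneg (z - w), mul_nonneg hz0 hw0, mul_le_one₀ hz hw0 hw]

lemma exists_pair_dist_le_one {c : ℂ} (z : Fin 6 → ℂ) (hz : ∀ i, dist (z i) c ≤ 1) :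
    ∃ i j, i ≠ j ∧ dist (z i) (z j) ≤ 1 := by
  obtain ⟨i, j, hij, hcos⟩ := exists_pair_half_le_cos_sub (fun i => arg (z i - c))
    fun i => arg_mem_Ioc _
  refine ⟨i, j, hij, ?_⟩
  rw [dist_eq, ← sub_sub_sub_cancel_right (z i) (z j) c]
  exact norm_sub_le_one_of_half_le_cos_arg_sub (dist_eq _ _ ▸ hz i) (dist_eq _ _ ▸ hz j) hcos

lemma card_le_five_of_pairwise_one_lt_dist {c : ℂ} {s : Finset ℂ} (hs : ∀ z ∈ s, dist z c ≤ 1)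
    (hsep : (s : Set ℂ).Pairwise fun z w => 1 < dist z w) : s.card ≤ 5 := by
  by_contra! h
  let f : Fin 6 ↪ s := (Fin.castLEEmb h).trans s.equivFin.symm.toEmbedding
  obtain ⟨i, j, hij, hle⟩ := exists_pair_dist_le_one (fun i => (f i : ℂ)) fun i => hs _ (f i).2
  exact (hsep (f i).2 (f j).2 (fun e => hij (f.injective (Subtype.ext e)))).not_ge hle

end Complex

section

variable {V : Type*} {G : SimpleGraph V}

lemma IsUnitDiskGraph.exists_complex_realization (hG : IsUnitDiskGraph G) :
    ∃ p : V → ℂ, ∀ u v, G.Adj u v ↔ u ≠ v ∧ dist (p u) (p v) ≤ 1 := by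
  obtain ⟨p, hp⟩ := hG
  exact ⟨fun v => Complex.orthonormalBasisOneI.repr.symm (p v), fun u v => by
    rw [hp, LinearIsometryEquiv.dist_map]⟩

lemma IsUnitDiskGraph.card_filter_adj_le_five [DecidableRel G.Adj]
    (hG : IsUnitDiskGraph G) {D : Finset V} (hD : IsIndependentSet G D) (v : V) :
    {u ∈ D | G.Adj v u}.card ≤ 5 := by
  classical
  obtain ⟨p, hp⟩ := hG.exists_complex_realization
  have hsep : ∀ u ∈ D, ∀ w ∈ D, u ≠ w → 1 < dist (p u) (p w) := fun u hu w hw huw => by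
    have hnadj : ¬G.Adj u w := hD hu hw huw
    rw [hp, not_and, not_le] at hnadj
    exact hnadj huw
  calc {u ∈ D | G.Adj v u}.card = ({u ∈ D | G.Adj v u}.image p).card := by
        refine (Finset.card_image_of_injOn fun u hu w hw huw => ?_).symm
        by_contra hne
        have := hsep u (Finset.mem_filter.1 hu).1 w (Finset.mem_filter.1 hw).1 hne
        rw [huw, dist_self] at this
        linarith
    _ ≤ 5 := by
      refine Complex.card_le_five_of_pairwise_one_lt_dist (c := p v) ?_ ?_
      · simp only [Finset.mem_image, Finset.mem_filter]
        rintro _ ⟨u, ⟨-, hvu⟩, rfl⟩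
        rw [dist_comm]
        exact ((hp v u).1 hvu).2
      · simp only [Finset.coe_image, Finset.coe_filter]
        rintro _ ⟨u, ⟨hu, -⟩, rfl⟩ _ ⟨w, ⟨hw, -⟩, rfl⟩ hne
        exact hsep u hu w hw (fun e => hne (e ▸ rfl))

lemma IsIndependentSet.exists_extension [Finite V] {I₀ S : Finset V}
    (hI₀ : IsIndependentSet G I₀) (hI₀S : I₀ ⊆ S) :
    ∃ I, I₀ ⊆ I ∧ I ⊆ S ∧ IsIndependentSet G I ∧ ∀ v ∈ S, v ∉ I → ∃ u ∈ I, G.Adj u v := by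
  classical
  obtain ⟨I, hI₀I, ⟨hIS, hI⟩, hmax⟩ :=
    Finite.exists_le_maximal (p := fun J : Finset V => J ⊆ S ∧ IsIndependentSet G J) ⟨hI₀S, hI₀⟩
  refine ⟨I, hI₀I, hIS, hI, fun v hvS hvI => ?_⟩
  by_contra! hfree
  have hinsert : IsIndependentSet G (insert v I : Finset V) := by
    rw [Finset.coe_insert]
    exact hI.insert fun u hu _ => ⟨fun h => hfree u hu h.symm, hfree u hu⟩
  exact hvI (hmax ⟨Finset.insert_subset hvS hIS, hinsert⟩ (Finset.subset_insert v I)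
    (Finset.mem_insert_self v I))

lemma card_sdiff_le_mul_card_sdiff [DecidableEq V] [DecidableRel G.Adj] {m : ℕ}
    {I D S : Finset V} (hID : I ⊆ D) (hD : IsIndependentSet G D) (hS : IsDominatingSet G S)
    (hI : ∀ v ∈ S, v ∉ I → ∃ u ∈ I, G.Adj u v) (hm : ∀ v, {u ∈ D | G.Adj v u}.card ≤ m + 1) :
    (D \ I).card ≤ m * (S \ I).card := by
  have hcover : D \ I ⊆ (S \ I).biUnion fun v => {u ∈ D \ I | G.Adj v u} := by
    intro w hw
    obtain ⟨hwD, hwI⟩ := Finset.mem_sdiff.1 hw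
    have hwS : w ∉ S := fun hwS => by
      obtain ⟨u, hu, huw⟩ := hI w hwS hwI
      exact hD (hID hu) hwD huw.ne huw
    obtain ⟨v, hvS, hvw⟩ := hS w hwS
    have hvI : v ∉ I := fun hvI => hD (hID hvI) hwD hvw.ne hvw
    exact Finset.mem_biUnion.2 ⟨v, Finset.mem_sdiff.2 ⟨hvS, hvI⟩, Finset.mem_filter.2 ⟨hw, hvw⟩⟩
  refine (Finset.card_le_card hcover).trans ?_
  rw [mul_comm]
  refine Finset.card_biUnion_le_card_mul _ _ _ fun v hv => ?_
  obtain ⟨hvS, hvI⟩ := Finset.mem_sdiff.1 hv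
  obtain ⟨u, huI, huv⟩ := hI v hvS hvI
  have hlt : {u ∈ D \ I | G.Adj v u}.card < {u ∈ D | G.Adj v u}.card := by
    refine Finset.card_lt_card ⟨Finset.monotone_filter_left _ Finset.sdiff_subset, fun h => ?_⟩
    have := h (Finset.mem_filter.2 ⟨hID huI, huv.symm⟩)
    exact (Finset.mem_sdiff.1 (Finset.mem_filter.1 this).1).2 huI
  linarith [hm v]

end

theorem exists_indep_dominating_43_9_approx_general {V : Type*} [Fintype V]
    (G : SimpleGraph V) (hG : IsUnitDiskGraph G)
    (Dstar : Set V) (hDstar : IsDominatingSet G Dstar) :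
    ∃ D : Set V, IsIndependentSet G D ∧ IsDominatingSet G D ∧
      (D.ncard : ℝ) ≤ 43 / 9 * Dstar.ncard := by
  classical
  set S := Dstar.toFinset
  have hS : IsDominatingSet G (S : Set V) := by rwa [Set.coe_toFinset]
  obtain ⟨I, -, hIS, hI, hIdom⟩ :=
    IsIndependentSet.exists_extension (G := G) (S := S) (by simp [IsIndependentSet]) S.empty_subset
  obtain ⟨D, hID, -, hD, hDdom⟩ := hI.exists_extension I.subset_univ
  have hDI := card_sdiff_le_mul_card_sdiff hID hD hS hIdom (hG.card_filter_adj_le_five hD)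
  have hcard : D.card ≤ 4 * S.card := by
    have := Finset.card_sdiff_add_card_eq_card hID
    have := Finset.card_sdiff_of_subset hIS
    have := Finset.card_le_card hIS
    omega
  refine ⟨D, hD, fun v hv => hDdom v (Finset.mem_univ v) hv, ?_⟩
  rw [Set.ncard_coe_finset, Set.ncard_eq_toFinset_card']
  have : (D.card : ℝ) ≤ 4 * S.card := by exact_mod_cast hcard
  linarith [(S.card.cast_nonneg : (0 : ℝ) ≤ S.card)]

/-- Every unit disk graph admits an independent dominating set whose size is at
most `43/9` times the size of a minimum dominating set. -/
theorem exists_indep_dominating_43_9_approx {V : Type*} [Fintype V]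
    (G : SimpleGraph V) (hG : IsUnitDiskGraph G)
    (Dstar : Set V) (hDstar : IsDominatingSet G Dstar)
    (hmin : ∀ D' : Set V, IsDominatingSet G D' → Dstar.ncard ≤ D'.ncard) :
    ∃ D : Set V, IsIndependentSet G D ∧ IsDominatingSet G D ∧
      (D.ncard : ℝ) ≤ 43 / 9 * Dstar.ncard :=
  exists_indep_dominating_43_9_approx_general G hG Dstar hDstar
end

section
/- The complete bipartite graph K_{2,3} is not a unit disk graph. Concretely: there do not exist points a, b, x, y, z in the Euclidean plane ℝ² such that the distance between a and b is greater than 1, the distances between x, y, z are pairwise greater than 1, and each of x, y, z is at distance at most 1 from both a and b. -/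
/-!
Take coordinates `t` along and `s` across the line `ab`, with `a` at the origin and `b = (d, 0)`,
`d ≥ 1`. A point within distance 1 of both `a` and `b` has `t ∈ [d - 1, 1] ⊆ [0, d]` and
`s² ≤ 1 - max (t², (t - d)²)`. For two such points on the same side of `ab` with `s² ≤ s'²` this
gives `(s - s')² ≤ s'²` and `(t - t')² ≤ max (t'², (t' - d)²) ≤ 1 - s'²`, so they are at distance
at most 1. Among three points, two lie on the same side of `ab`.
-/

open Module RealInnerProductSpace

theorem mul_nonneg_or_mul_nonneg_or_mul_nonneg {α : Type*} [Ring α] [LinearOrder α]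
    [IsStrictOrderedRing α] (a b c : α) : 0 ≤ a * b ∨ 0 ≤ a * c ∨ 0 ≤ b * c := by
  rcases le_total 0 a with ha | ha <;> rcases le_total 0 b with hb | hb
  · exact .inl (mul_nonneg ha hb)
  · rcases le_total 0 c with hc | hc
    · exact .inr (.inl (mul_nonneg ha hc))
    · exact .inr (.inr (mul_nonneg_of_nonpos_of_nonpos hb hc))
  · rcases le_total 0 c with hc | hc
    · exact .inr (.inr (mul_nonneg hb hc))
    · exact .inr (.inl (mul_nonneg_of_nonpos_of_nonpos ha hc))
  · exact .inl (mul_nonneg_of_nonpos_of_nonpos ha hb)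

theorem sub_sq_add_sub_sq_le_one_of_mem_halfLens {d t s t' s' : ℝ} (hd : 1 ≤ d)
    (hss' : 0 ≤ s * s') (h₀ : t ^ 2 + s ^ 2 ≤ 1) (h₁ : (t - d) ^ 2 + s ^ 2 ≤ 1)
    (h₀' : t' ^ 2 + s' ^ 2 ≤ 1) (h₁' : (t' - d) ^ 2 + s' ^ 2 ≤ 1) :
    (t - t') ^ 2 + (s - s') ^ 2 ≤ 1 := by
  wlog hs : s ^ 2 ≤ s' ^ 2 generalizing t s t' s'
  · have := this (mul_comm s s' ▸ hss') h₀' h₁' h₀ h₁ (by linarith)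
    linarith [show (t' - t) ^ 2 + (s' - s) ^ 2 = (t - t') ^ 2 + (s - s') ^ 2 by ring]
  have hs' : (s - s') ^ 2 ≤ s' ^ 2 := by nlinarith
  have ht : 0 ≤ t ∧ t ≤ d := by constructor <;> nlinarith
  have ht' : 0 ≤ t' ∧ t' ≤ d := by constructor <;> nlinarith
  rcases le_total t t' with h | h
  · have : (t - t') ^ 2 ≤ t' ^ 2 := sq_le_sq' (by linarith) (by linarith)
    linarith
  · have : (t - t') ^ 2 ≤ (t' - d) ^ 2 := by
      rw [← neg_sq (t' - d)]; exact sq_le_sq' (by linarith) (by linarith)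
    linarith

namespace Orientation

variable {E : Type*} [NormedAddCommGroup E] [InnerProductSpace ℝ E] [Fact (finrank ℝ E = 2)]
  (o : Orientation ℝ E (Fin 2))

local notation "ω" => o.areaForm

theorem dist_sq_eq_inner_sq_add_areaForm_sq {e : E} (he : ‖e‖ = 1) (a p q : E) :
    dist p q ^ 2 = (⟪e, p - a⟫ - ⟪e, q - a⟫) ^ 2 + (ω e (p - a) - ω e (q - a)) ^ 2 := by
  rw [← inner_sub_right, ← map_sub, sub_sub_sub_cancel_right, o.inner_sq_add_areaForm_sq, he,
    one_pow, one_mul, dist_eq_norm]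

theorem dist_le_one_of_areaForm_mul_nonneg {a b p q : E} (hab : 1 ≤ dist a b)
    (hpa : dist p a ≤ 1) (hpb : dist p b ≤ 1) (hqa : dist q a ≤ 1) (hqb : dist q b ≤ 1)
    (hside : 0 ≤ ω (b - a) (p - a) * ω (b - a) (q - a)) : dist p q ≤ 1 := by
  set d := dist a b
  have hd : ‖b - a‖ = d := by rw [← dist_eq_norm, dist_comm]
  set e := d⁻¹ • (b - a)
  have he : ‖e‖ = 1 := by
    rw [norm_smul, hd, norm_inv, Real.norm_of_nonneg (by positivity),
      inv_mul_cancel₀ (by positivity)]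
  have key := o.dist_sq_eq_inner_sq_add_areaForm_sq he a
  have hea : ⟪e, b - a⟫ = d := by
    rw [real_inner_smul_left, real_inner_self_eq_norm_sq, hd]; field_simp
  have hωe : ∀ v, ω e v = d⁻¹ * ω (b - a) v := fun v => by simp [e]
  have dist_a_sq : ∀ r, dist r a ^ 2 = ⟪e, r - a⟫ ^ 2 + ω e (r - a) ^ 2 := fun r => by
    simpa using key r a
  have dist_b_sq : ∀ r, dist r b ^ 2 = (⟪e, r - a⟫ - d) ^ 2 + ω e (r - a) ^ 2 := fun r => by
    rw [key, hea, hωe (b - a), areaForm_apply_self, mul_zero, sub_zero]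
  have sq_le_one_of_dist : ∀ r s : E, dist r s ≤ 1 → dist r s ^ 2 ≤ 1 := fun _ _ h =>
    pow_le_one₀ dist_nonneg h
  refine (sq_le_one_iff₀ dist_nonneg).1 ?_
  rw [key]
  refine sub_sq_add_sub_sq_le_one_of_mem_halfLens hab ?_
    (dist_a_sq p ▸ sq_le_one_of_dist _ _ hpa) (dist_b_sq p ▸ sq_le_one_of_dist _ _ hpb)
    (dist_a_sq q ▸ sq_le_one_of_dist _ _ hqa) (dist_b_sq q ▸ sq_le_one_of_dist _ _ hqb)
  rw [hωe, hωe, mul_mul_mul_comm]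
  exact mul_nonneg (mul_self_nonneg _) hside

end Orientation

open scoped EuclideanSpace

/-- `K_{2,3}` is not a unit disk graph: there are no planar points `a, b, x, y, z`
with `dist a b > 1`, the points `x, y, z` pairwise at distance greater than 1,
and each of `x, y, z` within distance 1 of both `a` and `b`. -/
theorem K23_not_unit_disk_graph :
    ¬ ∃ a b x y z : EuclideanSpace ℝ (Fin 2),
      1 < dist a b ∧
      1 < dist x y ∧ 1 < dist x z ∧ 1 < dist y z ∧
      dist x a ≤ 1 ∧ dist x b ≤ 1 ∧
      dist y a ≤ 1 ∧ dist y b ≤ 1 ∧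
      dist z a ≤ 1 ∧ dist z b ≤ 1 := by
  rintro ⟨a, b, x, y, z, hab, hxy, hxz, hyz, hxa, hxb, hya, hyb, hza, hzb⟩
  let o := (EuclideanSpace.basisFun (Fin 2) ℝ).toBasis.orientation
  rcases mul_nonneg_or_mul_nonneg_or_mul_nonneg (o.areaForm (b - a) (x - a))
    (o.areaForm (b - a) (y - a)) (o.areaForm (b - a) (z - a)) with h | h | h
  · exact hxy.not_ge (o.dist_le_one_of_areaForm_mul_nonneg hab.le hxa hxb hya hyb h)
  · exact hxz.not_ge (o.dist_le_one_of_areaForm_mul_nonneg hab.le hxa hxb hza hzb h)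
  · exact hyz.not_ge (o.dist_le_one_of_areaForm_mul_nonneg hab.le hya hyb hza hzb h)
end

section
/- Let G be a unit disk graph and let v be a vertex of G having at least 4 neighbors of degree 1. Then any two neighbors of v of degree greater than 1 are adjacent; that is, v together with its neighbors of degree greater than 1 forms a clique. -/
open Real ComplexConjugate

lemma half_le_cos_of_abs_le_pi_div_three {x : ℝ} (hx : |x| ≤ π / 3) : 1 / 2 ≤ cos x := by
  rw [← cos_abs, ← cos_pi_div_three]
  exact cos_le_cos_of_nonneg_of_le_pi (abs_nonneg x) (by linarith [pi_pos]) hx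

lemma exists_half_le_cos_sub_of_fin_six (a : Fin 6 → ℝ) (ha : ∀ i, a i ∈ Set.Ioc (-π) π) :
    ∃ i j, i ≠ j ∧ 1 / 2 ≤ cos (a i - a j) := by
  set σ := Tuple.sort a
  by_contra! hfar
  have gap : ∀ i j : Fin 6, i < j → π / 3 < a (σ j) - a (σ i) := by
    intro i j hij
    by_contra! hle
    have hmono : a (σ i) ≤ a (σ j) := Tuple.monotone_sort a hij.le
    refine (hfar (σ j) (σ i) (σ.injective.ne hij.ne')).not_ge ?_
    exact half_le_cos_of_abs_le_pi_div_three (abs_le.2 ⟨by linarith, hle⟩)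
  have h01 := gap 0 1 (by decide)
  have h12 := gap 1 2 (by decide)
  have h23 := gap 2 3 (by decide)
  have h34 := gap 3 4 (by decide)
  have h45 := gap 4 5 (by decide)
  have hmax := (ha (σ 5)).2
  have hmin := (ha (σ 0)).1
  -- the cyclic gap from the last direction back to the first
  have hwrap : 1 / 2 ≤ cos (2 * π - (a (σ 5) - a (σ 0))) :=
    half_le_cos_of_abs_le_pi_div_three (abs_le.2 ⟨by linarith, by linarith⟩)
  rw [cos_two_pi_sub] at hwrap
  exact (hfar (σ 5) (σ 0) (σ.injective.ne (by decide))).not_ge hwrap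

namespace Complex

lemma re_mul_conj_eq_norm_mul_norm_mul_cos_arg_sub (z w : ℂ) :
    (z * conj w).re = ‖z‖ * ‖w‖ * Real.cos (z.arg - w.arg) := by
  conv_lhs => rw [← norm_mul_cos_add_sin_mul_I z, ← norm_mul_cos_add_sin_mul_I w]
  simp only [← ofReal_cos, ← ofReal_sin, map_mul, conj_ofReal, map_add, conj_I, mul_re, mul_im,
    ofReal_re, ofReal_im, add_re, add_im, I_re, I_im, neg_re, neg_im, Real.cos_sub]
  ring

lemma norm_sub_le_of_half_le_cos_arg_sub {z w : ℂ} {r : ℝ} (hz : ‖z‖ ≤ r) (hw : ‖w‖ ≤ r)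
    (hcos : 1 / 2 ≤ Real.cos (z.arg - w.arg)) : ‖z - w‖ ≤ r := by
  have hz0 := norm_nonneg z
  have hw0 := norm_nonneg w
  have hsq : ‖z - w‖ ^ 2 ≤ r ^ 2 := by
    rw [Complex.sq_norm, normSq_sub, re_mul_conj_eq_norm_mul_norm_mul_cos_arg_sub,
      ← Complex.sq_norm, ← Complex.sq_norm]
    nlinarith [mul_nonneg (mul_nonneg hz0 hw0) (sub_nonneg.2 hcos), mul_nonneg hz0 hw0]
  exact abs_le_of_sq_le_sq' hsq (hz0.trans hz) |>.2

lemma exists_norm_sub_le_of_fin_six {r : ℝ} (z : Fin 6 → ℂ) (hz : ∀ i, ‖z i‖ ≤ r) :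
    ∃ i j, i ≠ j ∧ ‖z i - z j‖ ≤ r := by
  obtain ⟨i, j, hij, hcos⟩ := exists_half_le_cos_sub_of_fin_six (fun i ↦ (z i).arg)
    (fun i ↦ arg_mem_Ioc _)
  exact ⟨i, j, hij, norm_sub_le_of_half_le_cos_arg_sub (hz i) (hz j) hcos⟩

end Complex

lemma EuclideanSpace.exists_dist_le_of_fin_six {r : ℝ} (c : EuclideanSpace ℝ (Fin 2))
    (q : Fin 6 → EuclideanSpace ℝ (Fin 2)) (hq : ∀ i, dist (q i) c ≤ r) :
    ∃ i j, i ≠ j ∧ dist (q i) (q j) ≤ r := by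
  let e := Complex.orthonormalBasisOneI.repr.symm
  obtain ⟨i, j, hij, h⟩ := Complex.exists_norm_sub_le_of_fin_six (fun i ↦ e (q i) - e c)
    (fun i ↦ by rw [← dist_eq_norm, e.dist_map]; exact hq i)
  refine ⟨i, j, hij, ?_⟩
  rwa [sub_sub_sub_cancel_right, ← dist_eq_norm, e.dist_map] at h

lemma SimpleGraph.eq_of_adj_of_ncard_neighborSet_eq_one_s16 {V : Type*} {G : SimpleGraph V}
    {u v w : V} (hv : G.Adj u v) (hw : G.Adj u w) (h1 : (G.neighborSet u).ncard = 1) : w = v := by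
  obtain ⟨z, hz⟩ := Set.ncard_eq_one.1 h1
  have hv' : v ∈ G.neighborSet u := hv
  have hw' : w ∈ G.neighborSet u := hw
  rw [hz, Set.mem_singleton_iff] at hv' hw'
  rw [hv', hw']

namespace IsUnitDiskGraph

variable {V : Type*} {G : SimpleGraph V}

lemma exists_adj_of_six_le_ncard (hG : IsUnitDiskGraph G) {v : V} {s : Set V}
    (hs : s ⊆ G.neighborSet v) (h6 : 6 ≤ s.ncard) : ∃ a ∈ s, ∃ b ∈ s, G.Adj a b := by
  obtain ⟨p, hp⟩ := hG
  have := (Set.finite_of_ncard_pos (by omega : 0 < s.ncard)).fintype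
  obtain ⟨f⟩ : Nonempty (Fin 6 ↪ s) :=
    Function.Embedding.nonempty_of_card_le (by rwa [Fintype.card_fin, Set.fintypeCard_eq_ncard])
  obtain ⟨i, j, hij, hdist⟩ := EuclideanSpace.exists_dist_le_of_fin_six (p v) (fun i ↦ p (f i))
    (fun i ↦ by rw [dist_comm]; exact ((hp _ _).1 (hs (f i).2)).2)
  exact ⟨f i, (f i).2, f j, (f j).2,
    (hp _ _).2 ⟨fun h ↦ hij (f.injective (Subtype.ext h)), hdist⟩⟩

lemma adj_of_four_le_ncard_pendant_neighbors (hG : IsUnitDiskGraph G) {v x y : V}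
    (h4 : 4 ≤ {u | G.Adj v u ∧ (G.neighborSet u).ncard = 1}.ncard)
    (hx : G.Adj v x) (hy : G.Adj v y) (hx1 : (G.neighborSet x).ncard ≠ 1)
    (hy1 : (G.neighborSet y).ncard ≠ 1) (hxy : x ≠ y) : G.Adj x y := by
  set S := {u | G.Adj v u ∧ (G.neighborSet u).ncard = 1}
  have hS : S.Finite := Set.finite_of_ncard_pos (by omega)
  have hxS : x ∉ S := fun h ↦ hx1 h.2
  have hyS : y ∉ S := fun h ↦ hy1 h.2
  have hsub : insert x (insert y S) ⊆ G.neighborSet v := by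
    rintro u (rfl | rfl | hu)
    exacts [hx, hy, hu.1]
  have h6 : 6 ≤ (insert x (insert y S)).ncard := by
    rw [Set.ncard_insert_of_notMem (by simp [hxy, hxS]) (hS.insert y),
      Set.ncard_insert_of_notMem hyS hS]
    omega
  obtain ⟨a, ha, b, hb, hab⟩ := hG.exists_adj_of_six_le_ncard hsub h6
  have not_pendant : ∀ {a b}, b ∈ insert x (insert y S) → G.Adj a b → a ∉ S := by
    intro a b hb hab ha
    have hbv : b = v := G.eq_of_adj_of_ncard_neighborSet_eq_one_s16 ha.1.symm hab ha.2
    exact G.irrefl (hbv ▸ hsub hb)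
  have mem_pair : ∀ {u}, u ∈ insert x (insert y S) → u ∉ S → u = x ∨ u = y := by
    rintro u (rfl | rfl | hu) huS
    exacts [.inl rfl, .inr rfl, absurd hu huS]
  rcases mem_pair ha (not_pendant hb hab) with rfl | rfl <;>
    rcases mem_pair hb (not_pendant ha hab.symm) with rfl | rfl
  exacts [(G.irrefl hab).elim, hab, hab.symm, (G.irrefl hab).elim]

end IsUnitDiskGraph

theorem generator_big_degree_neighbors_clique_general {V : Type*}
    (G : SimpleGraph V) (hG : IsUnitDiskGraph G) (v : V)
    (h4 : 4 ≤ {u | G.Adj v u ∧ (G.neighborSet u).ncard = 1}.ncard) :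
    G.IsClique ({v} ∪ {u | G.Adj v u ∧ 1 < (G.neighborSet u).ncard}) := by
  rw [Set.singleton_union, SimpleGraph.isClique_insert]
  exact ⟨fun x hx y hy hxy ↦ hG.adj_of_four_le_ncard_pendant_neighbors h4 hx.1 hy.1 hx.2.ne'
    hy.2.ne' hxy, fun u hu _ ↦ hu.1⟩

/-- If a vertex `v` of a unit disk graph has at least 4 neighbors of degree 1,
then `v` together with its neighbors of degree greater than 1 forms a clique. -/
theorem generator_big_degree_neighbors_clique {V : Type*} [Fintype V]
    (G : SimpleGraph V) (hG : IsUnitDiskGraph G) (v : V)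
    (h4 : 4 ≤ {u | G.Adj v u ∧ (G.neighborSet u).ncard = 1}.ncard) :
    G.IsClique ({v} ∪ {u | G.Adj v u ∧ 1 < (G.neighborSet u).ncard}) :=
  generator_big_degree_neighbors_clique_general G hG v h4
end
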